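/- arXiv:1811.05761 — 3 statements merged into one kernel-verified Lean document; each statement's English description precedes it below -/
import Mathlib

section
/- Let T be the random weighted shift associated with i.i.d. nonnegative bounded random variables (X_n)_{n≥1}, and let R = essSup X_1. Then almost surely: ‖T(ω)‖ = R, the spectral radius of T(ω) equals R, and the spectrum of T(ω) (as an element of the Banach algebra of bounded operators on H) equals the closed disk {z ∈ ℂ : |z| ≤ R}. -/
open MeasureTheory ProbabilityTheory Filter

noncomputable section

/-- `ℓ²(ℕ, ℂ)`, the separable complex Hilbert space. -/
abbrev Hil : Type := lp (fun _ : ℕ => ℂ) 2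

/-- The orthonormal basis `(e_n)` of `ℓ²(ℕ, ℂ)` (0-indexed: `el n` is the paper's `e_{n+1}`). -/
def el (n : ℕ) : Hil := lp.single 2 n 1

open scoped ENNReal NNReal

local notation "⟪" x ", " y "⟫" => @inner ℂ _ _ x y

lemma inner_el (j : ℕ) (y : Hil) : ⟪el j, y⟫ = y j := by
  rw [el, lp.inner_single_left]
  simp [RCLike.inner_apply]

lemma norm_el (n : ℕ) : ‖el n‖ = 1 := by
  have := lp.norm_single (p := 2) (E := fun _ : ℕ => ℂ) (by norm_num) n (1:ℂ)
  simpa [el] using this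

lemma single_eq_smul_el (n : ℕ) (c : ℂ) : lp.single 2 n c = c • el n := by
  rw [el, ← lp.single_smul]
  norm_num

section Det

variable {w : ℕ → ℝ} {T : Hil →L[ℂ] Hil}

lemma T_coord (hT : ∀ n, T (el n) = (w n : ℂ) • el (n + 1)) (x : Hil) :
    (T x) 0 = 0 ∧ ∀ j, (T x) (j + 1) = (w j : ℂ) * x j := by
  have h1 : HasSum (fun n => lp.single 2 n (x n)) x := lp.hasSum_single (by norm_num) x
  have h2 : HasSum (fun n => T (lp.single 2 n (x n))) (T x) := T.hasSum h1
  have h3 : ∀ n, T (lp.single 2 n (x n)) = ((x n * w n) • el (n + 1) : Hil) := by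
    intro n
    rw [single_eq_smul_el, T.map_smul, hT n, smul_smul]
  rw [funext h3] at h2
  have key : ∀ j : ℕ, HasSum (fun n => if j = n + 1 then x n * w n else 0) ((T x) j) := by
    intro j
    have h4 := (innerSL ℂ (el j)).hasSum h2
    simp only [innerSL_apply_apply] at h4
    rw [inner_el] at h4
    refine (?_ : (fun n => if j = n + 1 then x n * w n else 0)
      = fun n => ⟪el j, (x n * w n) • el (n + 1)⟫) ▸ h4
    funext n
    rw [inner_smul_right, inner_el]
    rcases eq_or_ne j (n + 1) with h | h
    · subst h; simp [el, lp.single_apply_self]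
    · simp [el, lp.single_apply_ne _ _ _ h, h]
  constructor
  · have h0 := key 0
    simp only [Nat.zero_ne_add_one, if_false] at h0
    exact h0.unique hasSum_zero
  · intro j
    have hj := key (j + 1)
    have : (fun n => if j + 1 = n + 1 then x n * w n else 0)
        = fun n => if n = j then x j * w j else 0 := by
      funext n
      rcases eq_or_ne n j with h | h
      · subst h; simp
      · rw [if_neg (by omega), if_neg h]
    rw [this] at hj
    rw [hj.unique (hasSum_ite_eq j (x j * w j)), mul_comm]

lemma T_coord_zero (hT : ∀ n, T (el n) = (w n : ℂ) • el (n + 1)) (x : Hil) :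
    (T x) 0 = 0 := (T_coord hT x).1

lemma T_coord_succ (hT : ∀ n, T (el n) = (w n : ℂ) • el (n + 1)) (x : Hil) (j : ℕ) :
    (T x) (j + 1) = (w j : ℂ) * x j := (T_coord hT x).2 j

end Det

section Det2

variable {w : ℕ → ℝ} {R : ℝ} {T : Hil →L[ℂ] Hil}

lemma T_norm_le (hT : ∀ n, T (el n) = (w n : ℂ) • el (n + 1)) (hR0 : 0 ≤ R)
    (hw : ∀ n, 0 ≤ w n) (hwR : ∀ n, w n ≤ R) : ‖T‖ ≤ R := by
  refine T.opNorm_le_bound hR0 fun x => ?_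
  have h2 : (0:ℝ) < (2:ℝ≥0∞).toReal := by norm_num
  have hsT : Summable (fun n => ‖(T x) n‖ ^ (2:ℝ≥0∞).toReal) := (lp.memℓp (T x)).summable h2
  have hsx : Summable (fun n => ‖x n‖ ^ (2:ℝ≥0∞).toReal) := (lp.memℓp x).summable h2
  have hshift : (fun n => ‖((w n : ℂ)) * x n‖ ^ (2:ℝ≥0∞).toReal)
      = fun n => ‖(T x) (n+1)‖ ^ (2:ℝ≥0∞).toReal := by
    funext n; rw [T_coord_succ hT x n]
  have hsshift : Summable (fun n => ‖((w n : ℂ)) * x n‖ ^ (2:ℝ≥0∞).toReal) := by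
    rw [hshift]; exact (summable_nat_add_iff 1).mpr hsT
  have key : ‖T x‖ ^ (2:ℝ≥0∞).toReal ≤ (R * ‖x‖) ^ (2:ℝ≥0∞).toReal := by
    rw [lp.norm_rpow_eq_tsum h2 (T x), Summable.tsum_eq_zero_add hsT, T_coord_zero hT x]
    have hz : ‖(0:ℂ)‖ ^ (2:ℝ≥0∞).toReal = 0 := by
      rw [norm_zero]; exact Real.zero_rpow (by norm_num)
    rw [hz, zero_add]
    have h3 : ∀ n, ‖(T x) (n+1)‖ ^ (2:ℝ≥0∞).toReal
        ≤ R ^ (2:ℝ≥0∞).toReal * ‖x n‖ ^ (2:ℝ≥0∞).toReal := by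
      intro n
      rw [← Real.mul_rpow hR0 (norm_nonneg _), T_coord_succ hT x n]
      refine Real.rpow_le_rpow (norm_nonneg _) ?_ h2.le
      rw [norm_mul, Complex.norm_real, Real.norm_eq_abs, abs_of_nonneg (hw n)]
      exact mul_le_mul_of_nonneg_right (hwR n) (norm_nonneg _)
    calc ∑' n, ‖(T x) (n+1)‖ ^ (2:ℝ≥0∞).toReal
        ≤ ∑' n, R ^ (2:ℝ≥0∞).toReal * ‖x n‖ ^ (2:ℝ≥0∞).toReal := by
          refine Summable.tsum_le_tsum h3 ?_ (hsx.mul_left _)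
          rw [← hshift]; exact hsshift
      _ = R ^ (2:ℝ≥0∞).toReal * ∑' n, ‖x n‖ ^ (2:ℝ≥0∞).toReal := tsum_mul_left
      _ = R ^ (2:ℝ≥0∞).toReal * ‖x‖ ^ (2:ℝ≥0∞).toReal := by
          rw [← lp.norm_rpow_eq_tsum h2 x]
      _ = (R * ‖x‖) ^ (2:ℝ≥0∞).toReal := (Real.mul_rpow hR0 (norm_nonneg _)).symm
  have h4 : (2:ℝ≥0∞).toReal = ((2:ℕ):ℝ) := by norm_num
  rw [h4, Real.rpow_natCast, Real.rpow_natCast] at key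
  exact le_of_pow_le_pow_left₀ two_ne_zero (mul_nonneg hR0 (norm_nonneg x)) key

lemma T_norm_ge (hT : ∀ n, T (el n) = (w n : ℂ) • el (n + 1))
    (hw : ∀ n, 0 ≤ w n) (hblock1 : ∀ ε : ℝ, 0 < ε → ∃ m, R - ε < w m) : R ≤ ‖T‖ := by
  by_contra h
  push_neg at h
  obtain ⟨m, hm⟩ := hblock1 (R - ‖T‖) (by linarith)
  have h1 : ‖T (el m)‖ = w m := by
    rw [hT m, norm_smul, norm_el, Complex.norm_real, Real.norm_eq_abs,
      abs_of_nonneg (hw m), mul_one]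
  have h2 : ‖T (el m)‖ ≤ ‖T‖ * ‖el m‖ := T.le_opNorm _
  rw [norm_el, mul_one] at h2
  linarith

lemma zero_mem_spec (hT : ∀ n, T (el n) = (w n : ℂ) • el (n + 1)) :
    (0:ℂ) ∈ spectrum ℂ T := by
  rw [spectrum.mem_iff]
  intro hu
  rw [map_zero, zero_sub] at hu
  have hu' : IsUnit T := by simpa using hu.neg
  set S : Hil →L[ℂ] Hil := ↑hu'.unit⁻¹ with hS
  have h1 : T (S (el 0)) = el 0 := by
    have h0 : (hu'.unit : Hil →L[ℂ] Hil) * S = 1 := hu'.unit.mul_inv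
    have h2 := congrArg (fun A : Hil →L[ℂ] Hil => A (el 0)) h0
    simp only [ContinuousLinearMap.mul_apply, ContinuousLinearMap.one_apply] at h2
    rwa [IsUnit.unit_spec] at h2
  have h3 := congrArg (fun f : Hil => (f : ∀ _ : ℕ, ℂ) 0) h1
  simp only [T_coord_zero hT] at h3
  rw [el, lp.single_apply_self] at h3
  exact zero_ne_one h3

set_option maxHeartbeats 1000000 in
lemma mem_spec_of_lt (hT : ∀ n, T (el n) = (w n : ℂ) • el (n + 1)) (hw : ∀ n, 0 ≤ w n)
    (hblock : ∀ ε : ℝ, 0 < ε → ∀ k : ℕ, ∃ m, ∀ i < k, R - ε < w (m + i))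
    {lam : ℂ} (hl0 : lam ≠ 0) (hl : ‖lam‖ < R) : lam ∈ spectrum ℂ T := by
  rw [spectrum.mem_iff]
  intro hu
  set S : Hil →L[ℂ] Hil := ↑hu.unit⁻¹ with hS
  have hlpos : 0 < ‖lam‖ := norm_pos_iff.mpr hl0
  have hεpos : 0 < (R - ‖lam‖)/2 := by linarith
  set ρ : ℝ := R - (R - ‖lam‖)/2 with hρdef
  have hρ : ‖lam‖ < ρ := by rw [hρdef]; linarith
  have hρpos : 0 < ρ := lt_trans hlpos hρ
  obtain ⟨k, hk⟩ := pow_unbounded_of_one_lt (‖S‖ * ‖lam‖)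
    (show 1 < ρ/‖lam‖ from (one_lt_div hlpos).mpr hρ)
  obtain ⟨m, hm⟩ := hblock ((R - ‖lam‖)/2) hεpos k
  set u : Hil := S (el m) with hu_def
  have hAu : lam • u - T u = el m := by
    have h0 : (hu.unit : Hil →L[ℂ] Hil) * S = 1 := hu.unit.mul_inv
    have h2 := congrArg (fun A : Hil →L[ℂ] Hil => A (el m)) h0
    simp only [ContinuousLinearMap.mul_apply, ContinuousLinearMap.one_apply] at h2
    rw [IsUnit.unit_spec] at h2
    have h7 : (algebraMap ℂ (Hil →L[ℂ] Hil)) lam - T = lam • (1 : Hil →L[ℂ] Hil) - T := by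
      rw [Algebra.algebraMap_eq_smul_one]
    rw [h7, ContinuousLinearMap.sub_apply, ContinuousLinearMap.smul_apply,
      ContinuousLinearMap.one_apply] at h2
    exact h2
  have hc : ∀ j, lam * u j - (T u) j = (el m : ∀ _ : ℕ, ℂ) j := by
    intro j
    have h5 := congrArg (fun f : Hil => (f : ∀ _ : ℕ, ℂ) j) hAu
    exact (show lam * u j - (T u) j = ((lam • u - T u : Hil) : ℕ → ℂ) j from rfl).trans h5
  have hlow : ∀ j, j < m → u j = 0 := by
    intro j
    induction j with
    | zero =>
      intro h0
      have h5 := hc 0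
      rw [T_coord_zero hT, el, lp.single_apply_ne _ _ _ (by omega : (0:ℕ) ≠ m), sub_zero] at h5
      rcases mul_eq_zero.mp h5 with h | h
      · exact absurd h hl0
      · exact h
    | succ j ih =>
      intro hjm
      have h5 := hc (j+1)
      rw [T_coord_succ hT, el, lp.single_apply_ne _ _ _ (by omega : j+1 ≠ m),
        ih (by omega), mul_zero, sub_zero] at h5
      rcases mul_eq_zero.mp h5 with h | h
      · exact absurd h hl0
      · exact h
  have hum : lam * u m = 1 := by
    have h5 := hc m
    rcases Nat.eq_zero_or_pos m with h0 | hpos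
    · subst h0
      rw [T_coord_zero hT, sub_zero, el, lp.single_apply_self] at h5
      exact h5
    · obtain ⟨j, rfl⟩ : ∃ j, m = j + 1 := ⟨m - 1, by omega⟩
      rw [T_coord_succ hT, hlow j (by omega), mul_zero, sub_zero, el,
        lp.single_apply_self] at h5
      exact h5
  have hgrow : ∀ i, i ≤ k → ρ ^ i ≤ ‖u (m+i)‖ * ‖lam‖ ^ (i+1) := by
    intro i
    induction i with
    | zero =>
      intro _
      have h5 : ‖lam‖ * ‖u m‖ = 1 := by
        have h6 := congrArg norm hum
        rwa [norm_mul, norm_one] at h6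
      simp only [pow_zero, zero_add, pow_one, Nat.add_zero]
      nlinarith
    | succ i ih =>
      intro hik
      have hi : i < k := by omega
      have hrec := hc (m+i+1)
      rw [T_coord_succ hT, el, lp.single_apply_ne _ _ _ (by omega : m+i+1 ≠ m),
        sub_eq_zero] at hrec
      have hnorm : ‖lam‖ * ‖u (m+i+1)‖ = w (m+i) * ‖u (m+i)‖ := by
        have h6 := congrArg norm hrec
        rwa [norm_mul, norm_mul, Complex.norm_real, Real.norm_eq_abs,
          abs_of_nonneg (hw _)] at h6
      have hwge : ρ ≤ w (m+i) := by
        have := hm i hi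
        rw [hρdef]; linarith
      have h1 := ih (by omega)
      have hun : (0:ℝ) ≤ ‖u (m+i)‖ := norm_nonneg _
      have hpowpos : (0:ℝ) < ‖lam‖ ^ (i+1) := pow_pos hlpos _
      have hstep : ρ * ‖u (m+i)‖ ≤ ‖lam‖ * ‖u (m+i+1)‖ := by
        rw [hnorm]; exact mul_le_mul_of_nonneg_right hwge hun
      calc ρ^(i+1) = ρ * ρ^i := by ring
        _ ≤ ρ * (‖u (m+i)‖ * ‖lam‖^(i+1)) := mul_le_mul_of_nonneg_left h1 hρpos.le
        _ = (ρ * ‖u (m+i)‖) * ‖lam‖^(i+1) := by ring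
        _ ≤ (‖lam‖ * ‖u (m+i+1)‖) * ‖lam‖^(i+1) := mul_le_mul_of_nonneg_right hstep hpowpos.le
        _ = ‖u (m+(i+1))‖ * ‖lam‖^(i+1+1) := by
            have : m+(i+1) = m+i+1 := by omega
            rw [this]; ring
  have hfin := hgrow k le_rfl
  have hub : ‖u (m+k)‖ ≤ ‖S‖ := by
    have h1 : ‖u (m+k)‖ ≤ ‖u‖ := lp.norm_apply_le_norm (by norm_num) u (m+k)
    have h2 : ‖u‖ ≤ ‖S‖ * ‖el m‖ := S.le_opNorm _
    rw [norm_el, mul_one] at h2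
    linarith
  have hlk : (0:ℝ) < ‖lam‖ ^ k := pow_pos hlpos _
  have hdiv : (ρ/‖lam‖)^k * ‖lam‖^k = ρ^k := by
    rw [div_pow]; exact div_mul_cancel₀ _ (ne_of_gt hlk)
  have hcon : ρ^k < ρ^k := by
    calc ρ^k ≤ ‖u (m+k)‖ * ‖lam‖^(k+1) := hfin
      _ ≤ ‖S‖ * ‖lam‖^(k+1) := mul_le_mul_of_nonneg_right hub (pow_nonneg hlpos.le _)
      _ = (‖S‖ * ‖lam‖) * ‖lam‖^k := by ring
      _ < (ρ/‖lam‖)^k * ‖lam‖^k := mul_lt_mul_of_pos_right hk hlk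
      _ = ρ^k := hdiv
  exact absurd hcon (lt_irrefl _)

end Det2

lemma master {w : ℕ → ℝ} {R : ℝ} (hw0 : ∀ n, 0 ≤ w n) (hwR : ∀ n, w n ≤ R)
    (hblock : ∀ ε : ℝ, 0 < ε → ∀ k : ℕ, ∃ m, ∀ i < k, R - ε < w (m + i))
    (T : Hil →L[ℂ] Hil) (hT : ∀ n, T (el n) = (w n : ℂ) • el (n + 1)) :
    ‖T‖ = R ∧ spectralRadius ℂ T = ENNReal.ofReal R ∧
      spectrum ℂ T = Metric.closedBall (0 : ℂ) R := by
  have hR0 : 0 ≤ R := le_trans (hw0 0) (hwR 0)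
  have hblock1 : ∀ ε : ℝ, 0 < ε → ∃ m, R - ε < w m := by
    intro ε hε
    obtain ⟨m, hm⟩ := hblock ε hε 1
    exact ⟨m, by simpa using hm 0 (by norm_num)⟩
  have hnorm : ‖T‖ = R := le_antisymm (T_norm_le hT hR0 hw0 hwR) (T_norm_ge hT hw0 hblock1)
  have hspec : spectrum ℂ T = Metric.closedBall (0 : ℂ) R := by
    apply Set.Subset.antisymm
    · intro z hz
      have h1 := spectrum.subset_closedBall_norm_mul (𝕜 := ℂ) T hz
      have h2 : ‖(1 : Hil →L[ℂ] Hil)‖ ≤ 1 := by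
        rw [ContinuousLinearMap.one_def]; exact ContinuousLinearMap.norm_id_le
      have h3 : ‖T‖ * ‖(1 : Hil →L[ℂ] Hil)‖ ≤ R := by
        rw [hnorm]; nlinarith [norm_nonneg (1 : Hil →L[ℂ] Hil)]
      exact Metric.closedBall_subset_closedBall h3 h1
    · rcases eq_or_lt_of_le hR0 with hR0' | hRpos
      · intro z hz
        rw [Metric.mem_closedBall, dist_zero_right, ← hR0'] at hz
        have hz0 : z = 0 := norm_le_zero_iff.mp hz
        rw [hz0]; exact zero_mem_spec hT
      · have hball : Metric.ball (0:ℂ) R ⊆ spectrum ℂ T := by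
          intro z hz
          rw [Metric.mem_ball, dist_zero_right] at hz
          rcases eq_or_ne z 0 with rfl | hz0
          · exact zero_mem_spec hT
          · exact mem_spec_of_lt hT hw0 hblock hz0 hz
        rw [← closure_ball (0:ℂ) (ne_of_gt hRpos)]
        exact (spectrum.isClosed (𝕜 := ℂ) T).closure_subset_iff.mpr hball
  have hsr : spectralRadius ℂ T = ENNReal.ofReal R := by
    apply le_antisymm
    · show (⨆ z ∈ spectrum ℂ T, (‖z‖₊ : ℝ≥0∞)) ≤ ENNReal.ofReal R
      refine iSup₂_le fun z hz => ?_
      rw [hspec, Metric.mem_closedBall, dist_zero_right] at hz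
      rw [← enorm_eq_nnnorm, ← ofReal_norm]
      exact ENNReal.ofReal_le_ofReal hz
    · have hmem : (R : ℂ) ∈ spectrum ℂ T := by
        rw [hspec, Metric.mem_closedBall, dist_zero_right, Complex.norm_real,
          Real.norm_eq_abs, abs_of_nonneg hR0]
      have h5 : ENNReal.ofReal R = (‖(R:ℂ)‖₊ : ℝ≥0∞) := by
        rw [← enorm_eq_nnnorm, ← ofReal_norm, Complex.norm_real, Real.norm_eq_abs,
          abs_of_nonneg hR0]
      rw [h5]
      exact le_iSup₂ (f := fun z (_ : z ∈ spectrum ℂ T) => (‖z‖₊ : ℝ≥0∞)) _ hmem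
  exact ⟨hnorm, hsr, hspec⟩

section Prob

variable {Ω : Type*} [MeasurableSpace Ω] {P : Measure Ω} [IsProbabilityMeasure P]

set_option maxHeartbeats 1000000 in
lemma block_ae (X : ℕ → Ω → ℝ) (hmeas : ∀ n, Measurable (X n))
    (hbdd0 : ∀ n ω, 0 ≤ X n ω)
    (hindep : iIndepFun X P)
    (hident : ∀ n, IdentDistrib (X n) (X 0) P P)
    (R : ℝ) (hR : R = essSup (X 0) P) (k : ℕ) (ε : ℝ) (hε : 0 < ε) :
    ∀ᵐ ω ∂P, ∃ m, ∀ i < k, R - ε < X (m + i) ω := by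
  rcases Nat.eq_zero_or_pos k with rfl | hk
  · exact Filter.Eventually.of_forall fun ω => ⟨0, fun i hi => absurd hi (by omega)⟩
  set q : ℝ := R - ε with hq
  set As : ℕ → Set Ω := fun i => X i ⁻¹' Set.Ioi q with hAs
  have hAs_meas : ∀ i, MeasurableSet (As i) := fun i => (hmeas i) measurableSet_Ioi
  set p : ℝ≥0∞ := P (As 0) with hp_def
  have hAs_p : ∀ i, P (As i) = p := fun i => (hident i).measure_mem_eq measurableSet_Ioi
  haveI : (ae P).NeBot := ae_neBot.mpr (IsProbabilityMeasure.ne_zero P)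
  have hp0 : p ≠ 0 := by
    intro h0
    have hae : ∀ᵐ ω ∂P, X 0 ω ≤ q := by
      rw [ae_iff]
      convert h0 using 2
      ext ω
      simp [hAs, not_le]
    have hcob : IsCoboundedUnder (· ≤ ·) (ae P) (X 0) := by
      have hb : IsBoundedUnder (· ≥ ·) (ae P) (X 0) :=
        isBoundedUnder_of ⟨0, fun ω => hbdd0 0 ω⟩
      exact hb.isCoboundedUnder_le
    have hle : essSup (X 0) P ≤ q := limsup_le_of_le hcob hae
    rw [← hR, hq] at hle
    linarith
  set B : ℕ → Set Ω := fun j => ⋂ i ∈ Finset.range k, As (j*k + i) with hB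
  have hB_meas : ∀ j, MeasurableSet (B j) :=
    fun j => MeasurableSet.biInter (Finset.range k).countable_toSet (fun i _ => hAs_meas _)
  have hB_mem : ∀ j ω, ω ∈ B j ↔ ∀ i < k, ω ∈ As (j*k + i) := by
    intro j ω
    simp [hB, Set.mem_iInter]
  have hB_prob : ∀ j, P (B j) = p ^ k := by
    intro j
    have hinj : Function.Injective (fun i : ℕ => j*k + i) := fun a b h => by
      simpa using h
    have hBeq : B j = ⋂ i ∈ (Finset.range k).image (fun i => j*k + i), As i := by
      ext ω
      simp only [hB, Set.mem_iInter, Finset.mem_image, Finset.mem_range]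
      constructor
      · rintro h i ⟨i', hi', rfl⟩
        exact h i' hi'
      · intro h i hi
        exact h (j*k+i) ⟨i, hi, rfl⟩
    rw [hBeq, hindep.meas_biInter (fun i _ => ⟨Set.Ioi q, measurableSet_Ioi, rfl⟩),
      Finset.prod_congr rfl (fun i _ => hAs_p i), Finset.prod_const,
      Finset.card_image_of_injective _ hinj, Finset.card_range]
  set m' : ℕ → MeasurableSpace Ω := fun i => MeasurableSpace.comap (X i) inferInstance with hm'
  have hm'le : ∀ i, m' i ≤ ‹MeasurableSpace Ω› := fun i => (hmeas i).comap_le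
  have hiI : iIndep m' P := (iIndepFun_iff_iIndep _ _ _).mp hindep
  have hAs_meas' : ∀ i, MeasurableSet[m' i] (As i) := fun i => ⟨Set.Ioi q, measurableSet_Ioi, rfl⟩
  have hB_meas' : ∀ (j : ℕ) (Sσ : Set ℕ), (∀ i, j*k ≤ i → i < j*k+k → i ∈ Sσ) →
      MeasurableSet[⨆ i ∈ Sσ, m' i] (B j) := by
    intro j Sσ hsub
    refine MeasurableSet.biInter (Finset.range k).countable_toSet (fun i hi => ?_)
    have hik : i < k := Finset.mem_range.mp hi
    have hle : m' (j*k+i) ≤ ⨆ i ∈ Sσ, m' i :=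
      le_biSup _ (hsub _ (by omega) (by omega))
    exact hle _ (hAs_meas' _)
  set D : ℕ → Set Ω := fun N => ⋂ j ∈ Finset.range N, (B j)ᶜ with hD
  have hDprob : ∀ N, P (D N) = (1 - p^k)^N := by
    intro N
    induction N with
    | zero => simp [hD]
    | succ N ih =>
      have hsplit : D (N+1) = D N ∩ (B N)ᶜ := by
        ext ω
        simp only [hD, Set.mem_iInter, Finset.mem_range, Set.mem_inter_iff, Set.mem_compl_iff]
        constructor
        · intro h
          exact ⟨fun j hj => h j (by omega), h N (by omega)⟩
        · rintro ⟨h1, h2⟩ j hj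
          rcases Nat.lt_succ_iff_lt_or_eq.mp hj with h | rfl
          · exact h1 j h
          · exact h2
      have hdisj : Disjoint {i : ℕ | i < N*k} {i : ℕ | N*k ≤ i ∧ i < N*k + k} := by
        rw [Set.disjoint_left]
        rintro i hi ⟨h1, h2⟩
        simp only [Set.mem_setOf_eq] at hi
        omega
      have hind := indep_iSup_of_disjoint hm'le hiI hdisj
      have hDmeas : MeasurableSet[⨆ i ∈ {i : ℕ | i < N*k}, m' i] (D N) := by
        refine MeasurableSet.biInter (Finset.range N).countable_toSet (fun j hj => ?_)
        have hjN : j < N := Finset.mem_range.mp hj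
        refine (hB_meas' j _ ?_).compl
        intro i hi1 hi2
        simp only [Set.mem_setOf_eq]
        have hmul : (j+1)*k ≤ N*k := Nat.mul_le_mul_right k (by omega)
        have hsm : (j+1)*k = j*k + k := Nat.succ_mul j k
        omega
      have hBmeas : MeasurableSet[⨆ i ∈ {i : ℕ | N*k ≤ i ∧ i < N*k + k}, m' i] ((B N)ᶜ) := by
        refine (hB_meas' N _ ?_).compl
        intro i h1 h2
        exact ⟨h1, h2⟩
      have hmul := (Indep_iff _ _ P).mp hind _ _ hDmeas hBmeas
      rw [hsplit, hmul, ih, prob_compl_eq_one_sub (hB_meas N), hB_prob N, pow_succ]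
  have hlt1 : 1 - p^k < 1 :=
    ENNReal.sub_lt_self ENNReal.one_ne_top one_ne_zero (pow_ne_zero k hp0)
  have htend : Tendsto (fun N => (1 - p^k)^N) atTop (nhds 0) :=
    ENNReal.tendsto_pow_atTop_nhds_zero_of_lt_one hlt1
  have hbad : P (⋂ j, (B j)ᶜ) = 0 := by
    have hle : ∀ N, P (⋂ j, (B j)ᶜ) ≤ (1 - p^k)^N := by
      intro N
      rw [← hDprob N]
      refine measure_mono fun ω hω => ?_
      simp only [Set.mem_iInter] at hω
      simp only [hD, Set.mem_iInter]
      intro j _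
      exact hω j
    exact le_antisymm (ge_of_tendsto' htend hle) (by positivity)
  rw [ae_iff]
  refine measure_mono_null (fun ω hω => ?_) hbad
  simp only [Set.mem_setOf_eq, not_exists] at hω
  simp only [Set.mem_iInter, Set.mem_compl_iff]
  intro j hj
  apply hω (j*k)
  intro i hi
  have hmem : ω ∈ As (j*k + i) := (hB_mem j ω).mp hj i hi
  simpa [hAs, hq] using hmem

end Prob

/-- almost surely, `‖T(ω)‖ = R`, the spectral radius of `T(ω)` is `R`, and the
spectrum of `T(ω)` is the closed disk of radius `R = essSup X_1`. -/
theorem stmt_0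
    {Ω : Type*} [MeasurableSpace Ω] (P : Measure Ω) [IsProbabilityMeasure P]
    (X : ℕ → Ω → ℝ) (C : ℝ)
    (hmeas : ∀ n, Measurable (X n))
    (hbdd : ∀ n ω, 0 ≤ X n ω ∧ X n ω ≤ C)
    (hindep : iIndepFun X P)
    (hident : ∀ n, IdentDistrib (X n) (X 0) P P)
    (T : Ω → Hil →L[ℂ] Hil)
    (hT : ∀ ω n, T ω (el n) = (X n ω : ℂ) • el (n + 1))
    (R : ℝ) (hR : R = essSup (X 0) P) :
    ∀ᵐ ω ∂P,
      ‖T ω‖ = R ∧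
      spectralRadius ℂ (T ω) = ENNReal.ofReal R ∧
      spectrum ℂ (T ω) = Metric.closedBall (0 : ℂ) R := by
  have hbd : IsBoundedUnder (· ≤ ·) (ae P) (X 0) :=
    isBoundedUnder_of ⟨C, fun ω => (hbdd 0 ω).2⟩
  have hX0 : ∀ᵐ ω ∂P, X 0 ω ≤ R := by
    rw [hR]; exact ae_le_essSup hbd
  have h0 : P (X 0 ⁻¹' Set.Ioi R) = 0 := by
    have h := hX0
    rw [ae_iff] at h
    convert h using 2
    ext ω
    simp [not_le]
  have hXn : ∀ n, ∀ᵐ ω ∂P, X n ω ≤ R := by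
    intro n
    have hn : P (X n ⁻¹' Set.Ioi R) = 0 := by
      rw [(hident n).measure_mem_eq measurableSet_Ioi, h0]
    rw [ae_iff]
    convert hn using 2
    ext ω
    simp [not_le]
  have hblocks : ∀ k : ℕ, ∀ᵐ ω ∂P, ∃ m, ∀ i < k, R - 1/((k:ℝ)+1) < X (m+i) ω := by
    intro k
    exact block_ae X hmeas (fun n ω => (hbdd n ω).1) hindep hident R hR k
      (1/((k:ℝ)+1)) (by positivity)
  filter_upwards [(ae_all_iff.mpr hXn).and (ae_all_iff.mpr hblocks)] with ω hω
  obtain ⟨h1, h2⟩ := hω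
  have hblock : ∀ ε : ℝ, 0 < ε → ∀ k : ℕ, ∃ m, ∀ i < k, R - ε < X (m+i) ω := by
    intro ε hε k
    obtain ⟨n, hn⟩ := exists_nat_one_div_lt hε
    obtain ⟨m, hm⟩ := h2 (max k n)
    refine ⟨m, fun i hi => ?_⟩
    have h3 := hm i (lt_of_lt_of_le hi (le_max_left _ _))
    have h5 : (0:ℝ) < (n:ℝ) + 1 := by positivity
    have h4 : 1/(((max k n : ℕ):ℝ)+1) ≤ 1/((n:ℝ)+1) := by
      apply one_div_le_one_div_of_le h5
      have h6 : (n:ℝ) ≤ ((max k n : ℕ):ℝ) := by exact_mod_cast le_max_right k n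
      linarith
    linarith
  exact master (fun n => (hbdd n ω).1) h1 hblock (T ω) (hT ω)

end
end

section
/- Let T be the random weighted shift associated with i.i.d. nonnegative bounded random variables (X_n)_{n≥1}. If 0 belongs to the essential range of X_1, then there exists a deterministic unilateral weighted shift W on H (i.e., a bounded operator with W e_n = μ_n e_{n+1} for some bounded sequence of nonnegative reals (μ_n)) such that almost surely T(ω) is approximately unitarily equivalent to W, i.e., there exists a sequence of unitary operators (U_k) on H with ‖U_k* T(ω) U_k − W‖ → 0 as k → ∞. -/
open MeasureTheory ProbabilityTheory Filter
open scoped ENNReal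

noncomputable section

def essRange {Ω : Type*} [MeasurableSpace Ω] (P : Measure Ω) (f : Ω → ℝ) : Set ℝ :=
  {y : ℝ | ∀ ε > 0, 0 < P {ω | |f ω - y| < ε}}

def ApproxUnitEquiv (A B : Hil →L[ℂ] Hil) : Prop :=
  ∃ U : ℕ → (Hil →L[ℂ] Hil), (∀ k, U k ∈ unitary (Hil →L[ℂ] Hil)) ∧
    Tendsto (fun k => ‖star (U k) * A * U k - B‖) atTop (nhds 0)

lemma hp2 : 0 < (2 : ℝ≥0∞).toReal := by norm_num

lemma el_apply (n j : ℕ) : (el n : ∀ _ : ℕ, ℂ) j = if j = n then 1 else 0 := by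
  by_cases h : j = n
  · subst h; simp [el, lp.single_apply_self]
  · simp [el, lp.single_apply_ne _ _ _ h, h]

lemma Hil.summable (f : Hil) : Summable (fun n => ‖f n‖ ^ (2:ℝ≥0∞).toReal) :=
  (lp.memℓp f).summable hp2

def shiftFun (w : ℕ → ℂ) (f : ℕ → ℂ) : ℕ → ℂ := fun n =>
  match n with
  | 0 => 0
  | m + 1 => w m * f m

lemma memℓp_shiftFun {w : ℕ → ℂ} {M : ℝ} (hM : ∀ n, ‖w n‖ ≤ M) (f : Hil) :
    Memℓp (shiftFun w f) 2 := by
  apply memℓp_gen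
  rw [← summable_nat_add_iff 1]
  have h1 : ∀ n : ℕ, ‖shiftFun w (⇑f) (n+1)‖ ^ (2 : ℝ≥0∞).toReal
      ≤ M ^ (2 : ℝ≥0∞).toReal * ‖f n‖ ^ (2 : ℝ≥0∞).toReal := by
    intro n
    have : ‖shiftFun w (⇑f) (n+1)‖ = ‖w n‖ * ‖f n‖ := norm_mul _ _
    rw [this, Real.mul_rpow (norm_nonneg _) (norm_nonneg _)]
    exact mul_le_mul_of_nonneg_right
      (Real.rpow_le_rpow (norm_nonneg _) (hM n) (le_of_lt hp2))
      (Real.rpow_nonneg (norm_nonneg _) _)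
  exact Summable.of_nonneg_of_le (fun n => Real.rpow_nonneg (norm_nonneg _) _) h1
    ((Hil.summable f).mul_left _)

lemma norm_shiftFun_le {w : ℕ → ℂ} {M : ℝ} (hM0 : 0 ≤ M) (hM : ∀ n, ‖w n‖ ≤ M) (f : Hil) :
    ‖(⟨shiftFun w f, memℓp_shiftFun hM f⟩ : Hil)‖ ≤ M * ‖f‖ := by
  apply lp.norm_le_of_tsum_le hp2 (mul_nonneg hM0 (norm_nonneg _))
  set r := (2 : ℝ≥0∞).toReal with hr
  have hsum : Summable (fun n => ‖shiftFun w (⇑f) n‖ ^ r) :=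
    (memℓp_shiftFun hM f).summable hp2
  have h0 : ∑' n, ‖shiftFun w (⇑f) n‖ ^ r = ∑' n, ‖shiftFun w (⇑f) (n+1)‖ ^ r := by
    rw [Summable.tsum_eq_zero_add hsum]
    have : ‖shiftFun w (⇑f) 0‖ ^ r = 0 := by
      show ‖(0:ℂ)‖ ^ r = 0
      simp [Real.zero_rpow (by norm_num [hr] : r ≠ 0)]
    rw [this, zero_add]
  rw [show ((⟨shiftFun w f, memℓp_shiftFun hM f⟩ : Hil) : ∀ _ : ℕ, ℂ) = shiftFun w f from rfl]
  rw [h0]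
  have h1 : ∀ n : ℕ, ‖shiftFun w (⇑f) (n+1)‖ ^ r ≤ M ^ r * ‖f n‖ ^ r := by
    intro n
    have : ‖shiftFun w (⇑f) (n+1)‖ = ‖w n‖ * ‖f n‖ := norm_mul _ _
    rw [this, Real.mul_rpow (norm_nonneg _) (norm_nonneg _)]
    exact mul_le_mul_of_nonneg_right
      (Real.rpow_le_rpow (norm_nonneg _) (hM n) (le_of_lt hp2))
      (Real.rpow_nonneg (norm_nonneg _) _)
  calc ∑' n, ‖shiftFun w (⇑f) (n+1)‖ ^ r ≤ ∑' n, M ^ r * ‖f n‖ ^ r := by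
        apply ((summable_nat_add_iff 1).2 hsum).tsum_le_tsum h1 ((Hil.summable f).mul_left _)
    _ = M ^ r * ∑' n, ‖f n‖ ^ r := tsum_mul_left
    _ = M ^ r * ‖f‖ ^ r := by rw [← lp.norm_rpow_eq_tsum hp2]
    _ = (M * ‖f‖) ^ r := (Real.mul_rpow hM0 (norm_nonneg _)).symm

def shiftCLM (w : ℕ → ℂ) (M : ℝ) (hM0 : 0 ≤ M) (hM : ∀ n, ‖w n‖ ≤ M) : Hil →L[ℂ] Hil :=
  LinearMap.mkContinuous
    { toFun := fun f => (⟨shiftFun w f, memℓp_shiftFun hM f⟩ : Hil)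
      map_add' := by
        intro f g
        apply Subtype.ext
        funext n
        match n with
        | 0 => show (0:ℂ) = _ + _; simp [shiftFun]
        | m + 1 =>
          show w m * (f + g : Hil) m = w m * f m + w m * g m
          rw [lp.coeFn_add]; simp [mul_add]
      map_smul' := by
        intro c f
        apply Subtype.ext
        funext n
        match n with
        | 0 => show (0:ℂ) = c • (0:ℂ); simp
        | m + 1 =>
          show w m * (c • f : Hil) m = c • (w m * f m)
          rw [lp.coeFn_smul]
          simp [smul_eq_mul]; ring }
    M (fun f => norm_shiftFun_le hM0 hM f)

lemma shiftCLM_el (w : ℕ → ℂ) (M : ℝ) (hM0 : 0 ≤ M) (hM : ∀ n, ‖w n‖ ≤ M) (n : ℕ) :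
    shiftCLM w M hM0 hM (el n) = w n • el (n + 1) := by
  apply Subtype.ext
  funext m
  show shiftFun w (el n) m = (w n • el (n+1) : Hil) m
  rw [lp.coeFn_smul]
  match m with
  | 0 =>
    show (0:ℂ) = w n • (el (n+1) : ∀ _ : ℕ, ℂ) 0
    rw [el_apply]; simp
  | k + 1 =>
    show w k * (el n : ∀ _ : ℕ, ℂ) k = w n • (el (n+1) : ∀ _ : ℕ, ℂ) (k+1)
    rw [el_apply, el_apply]
    by_cases h : k = n
    · subst h; simp
    · simp [h, fun hh => h (Nat.succ_injective hh)]

lemma norm_shiftCLM_le (w : ℕ → ℂ) (M : ℝ) (hM0 : 0 ≤ M) (hM : ∀ n, ‖w n‖ ≤ M) :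
    ‖shiftCLM w M hM0 hM‖ ≤ M :=
  LinearMap.mkContinuous_norm_le _ hM0 _

lemma clm_ext_el {A B : Hil →L[ℂ] Hil} (h : ∀ n, A (el n) = B (el n)) : A = B := by
  refine ContinuousLinearMap.ext fun f => ?_
  have hs : HasSum (fun n : ℕ => lp.single 2 n (f n)) f :=
    lp.hasSum_single ENNReal.ofNat_ne_top f
  have hfe : ∀ n : ℕ, lp.single 2 n (f n) = f n • el n := by
    intro n
    rw [el, ← lp.single_smul]
    norm_num
  have hA : HasSum (fun n : ℕ => f n • A (el n)) (A f) := by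
    have := hs.mapL A
    simpa [hfe] using this
  have hB : HasSum (fun n : ℕ => f n • B (el n)) (B f) := by
    have := hs.mapL B
    simpa [hfe] using this
  refine hA.unique ?_
  simpa [h] using hB

lemma shiftlike_norm_le {A : Hil →L[ℂ] Hil} {c : ℕ → ℂ} {M : ℝ} (hM0 : 0 ≤ M)
    (hA : ∀ n, A (el n) = c n • el (n + 1)) (hM : ∀ n, ‖c n‖ ≤ M) : ‖A‖ ≤ M := by
  have : A = shiftCLM c M hM0 hM := clm_ext_el (fun n => by rw [hA, shiftCLM_el])
  rw [this]; exact norm_shiftCLM_le _ _ _ _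

lemma memℓp_permFun (σ : ℕ ≃ ℕ) (f : Hil) : Memℓp (fun n => f (σ.symm n)) 2 := by
  apply memℓp_gen
  have : Summable ((fun m => ‖f m‖ ^ (2:ℝ≥0∞).toReal) ∘ σ.symm) :=
    (Equiv.summable_iff σ.symm).2 (Hil.summable f)
  exact this

def permLE (σ : ℕ ≃ ℕ) : Hil ≃ₗ[ℂ] Hil where
  toFun f := (⟨fun n => f (σ.symm n), memℓp_permFun σ f⟩ : Hil)
  invFun f := (⟨fun n => f (σ n), by have := memℓp_permFun σ.symm f; simp only [Equiv.symm_symm] at this; exact this⟩ : Hil)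
  left_inv f := by apply Subtype.ext; funext n; simp
  right_inv f := by apply Subtype.ext; funext n; simp
  map_add' f g := by
    apply Subtype.ext; funext n
    show (f + g : Hil) (σ.symm n) = _
    rw [lp.coeFn_add]
    show f (σ.symm n) + g (σ.symm n) = ((⟨_, memℓp_permFun σ f⟩ : Hil) + ⟨_, memℓp_permFun σ g⟩ : Hil) n
    rw [lp.coeFn_add]; rfl
  map_smul' c f := by
    apply Subtype.ext; funext n
    show (c • f : Hil) (σ.symm n) = (c • (⟨_, memℓp_permFun σ f⟩ : Hil) : Hil) n
    rw [lp.coeFn_smul, lp.coeFn_smul]; rfl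

def permLIE (σ : ℕ ≃ ℕ) : Hil ≃ₗᵢ[ℂ] Hil :=
  ⟨permLE σ, by
    intro f
    show ‖(⟨fun n => f (σ.symm n), memℓp_permFun σ f⟩ : Hil)‖ = ‖f‖
    rw [lp.norm_eq_tsum_rpow hp2, lp.norm_eq_tsum_rpow hp2]
    congr 1
    exact Equiv.tsum_eq σ.symm (fun m => ‖f m‖ ^ (2:ℝ≥0∞).toReal)⟩

def permU (σ : ℕ ≃ ℕ) : Hil →L[ℂ] Hil := (permLIE σ : Hil →L[ℂ] Hil)

lemma permLIE_symm (σ : ℕ ≃ ℕ) : (permLIE σ).symm = permLIE σ.symm := by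
  apply LinearIsometryEquiv.ext
  intro f
  apply Subtype.ext; funext n
  rfl

lemma permU_mem (σ : ℕ ≃ ℕ) : permU σ ∈ unitary (Hil →L[ℂ] Hil) :=
  (Unitary.linearIsometryEquiv.symm (permLIE σ)).property

lemma star_permU (σ : ℕ ≃ ℕ) : star (permU σ) = permU σ.symm := by
  rw [permU, LinearIsometryEquiv.star_eq_symm, permLIE_symm]; rfl

lemma permU_el (σ : ℕ ≃ ℕ) (n : ℕ) : permU σ (el n) = el (σ n) := by
  apply Subtype.ext; funext m
  show (el n : ∀ _ : ℕ, ℂ) (σ.symm m) = (el (σ n) : ∀ _ : ℕ, ℂ) m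
  rw [el_apply, el_apply]
  by_cases h : m = σ n
  · subst h; simp
  · rw [if_neg h, if_neg]
    intro hc
    exact h (by rw [← hc, Equiv.apply_symm_apply])

lemma norm_permU_le (σ : ℕ ≃ ℕ) : ‖permU σ‖ ≤ 1 := by
  apply ContinuousLinearMap.opNorm_le_bound _ zero_le_one
  intro f
  rw [one_mul]
  exact le_of_eq ((permLIE σ).norm_map f)

lemma conj_el {A : Hil →L[ℂ] Hil} {a : ℕ → ℂ} (hA : ∀ n, A (el n) = a n • el (n + 1))
    (σ : ℕ ≃ ℕ) (hσ : ∀ n, a (σ n) ≠ 0 → σ (n + 1) = σ n + 1) (n : ℕ) :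
    (star (permU σ) * A * permU σ) (el n) = a (σ n) • el (n + 1) := by
  rw [ContinuousLinearMap.mul_apply, ContinuousLinearMap.mul_apply, permU_el, hA,
    _root_.map_smul, star_permU, permU_el]
  by_cases h : a (σ n) = 0
  · simp [h]
  · rw [← hσ n h, Equiv.symm_apply_apply]




section Prob

variable {Ω : Type*} [MeasurableSpace Ω] (P : Measure Ω) [IsProbabilityMeasure P]

lemma notMem_essRange {f : Ω → ℝ} {y : ℝ} (h : y ∉ essRange P f) :
    ∃ ε > (0:ℝ), P {ω | |f ω - y| < ε} = 0 := by
  simp only [essRange, Set.mem_setOf_eq, not_forall] at h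
  obtain ⟨ε, hε, hP⟩ := h
  exact ⟨ε, hε, by simpa [pos_iff_ne_zero, not_not] using hP⟩

lemma isClosed_essRange (f : Ω → ℝ) : IsClosed (essRange P f) := by
  rw [← isOpen_compl_iff, Metric.isOpen_iff]
  intro y hy
  obtain ⟨ε, hε, hP0⟩ := notMem_essRange P hy
  refine ⟨ε / 2, by positivity, ?_⟩
  intro y' hy'
  rw [Metric.mem_ball, Real.dist_eq] at hy'
  intro hmem
  have hsub : {ω | |f ω - y'| < ε / 2} ⊆ {ω | |f ω - y| < ε} := by
    intro ω hω
    simp only [Set.mem_setOf_eq] at hω ⊢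
    calc |f ω - y| ≤ |f ω - y'| + |y' - y| := by
          have := abs_sub_le (f ω) y' y; linarith [abs_sub_le (f ω) y' y]
      _ < ε / 2 + ε / 2 := by linarith
      _ = ε := by ring
  have := hmem (ε/2) (by positivity)
  rw [measure_mono_null hsub hP0] at this
  exact lt_irrefl _ this

lemma null_compl_essRange (f : Ω → ℝ) : P {ω | f ω ∉ essRange P f} = 0 := by
  classical
  set Q : Set (ℚ × ℚ) := {p | P {ω | |f ω - (p.1:ℝ)| < (p.2:ℝ)} = 0} with hQ
  have hsub : {ω | f ω ∉ essRange P f} ⊆ ⋃ p ∈ Q, {ω | |f ω - (p.1:ℝ)| < (p.2:ℝ)} := by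
    intro ω hω
    obtain ⟨ε, hε, hP0⟩ := notMem_essRange P hω
    set y := f ω
    obtain ⟨q, hq1, hq2⟩ := exists_rat_btwn (show y - ε/4 < y by linarith)
    have hqy : |y - (q:ℝ)| < ε/4 := by rw [abs_sub_lt_iff]; constructor <;> linarith
    obtain ⟨r, hr1, hr2⟩ := exists_rat_btwn (show (ε/4 : ℝ) < ε/2 by linarith)
    have hmem : (q, r) ∈ Q := by
      apply measure_mono_null ?_ hP0
      intro ω' hω'
      simp only [Set.mem_setOf_eq] at hω' ⊢
      calc |f ω' - y| ≤ |f ω' - (q:ℝ)| + |(q:ℝ) - y| := abs_sub_le _ _ _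
        _ < (r:ℝ) + ε/4 := by
            rw [abs_sub_comm] at hqy; exact add_lt_add hω' hqy
        _ < ε := by linarith
    exact Set.mem_biUnion hmem (by simpa using lt_trans hqy hr1)
  apply measure_mono_null hsub
  have : ∀ p ∈ Q, P {ω | |f ω - (p.1:ℝ)| < (p.2:ℝ)} = 0 := fun p hp => hp
  exact (measure_biUnion_null_iff (Set.to_countable Q)).2 this

lemma ae_mem_essRange (X : ℕ → Ω → ℝ) (hident : ∀ n, IdentDistrib (X n) (X 0) P P) :
    ∀ᵐ ω ∂P, ∀ n, X n ω ∈ essRange P (X 0) := by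
  rw [ae_all_iff]
  intro n
  have hm : MeasurableSet (essRange P (X 0))ᶜ :=
    (isClosed_essRange P (X 0)).measurableSet.compl
  have h1 : P (X n ⁻¹' (essRange P (X 0))ᶜ) = P (X 0 ⁻¹' (essRange P (X 0))ᶜ) :=
    (hident n).measure_mem_eq hm
  have h2 : P (X 0 ⁻¹' (essRange P (X 0))ᶜ) = 0 := null_compl_essRange P (X 0)
  rw [ae_iff]
  simpa [Set.preimage, Set.mem_compl_iff] using h1.trans h2

lemma ae_pattern (X : ℕ → Ω → ℝ) (hmeas : ∀ n, Measurable (X n))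
    (hindep : iIndepFun X P)
    (hident : ∀ n, IdentDistrib (X n) (X 0) P P)
    (u : ℕ → ℝ) (M : ℕ) (ε : ℝ)
    (hu : ∀ i, i < M → 0 < P {ω | |X 0 ω - u i| < ε}) :
    ∀ᵐ ω ∂P, ∀ N, ∃ q, N ≤ q ∧ ∀ i, i < M → |X (q + i) ω - u i| < ε := by
  classical
  rcases Nat.eq_zero_or_pos M with hM | hM
  · filter_upwards with ω N
    exact ⟨N, le_refl N, by omega⟩
  set B : ℕ → Set ℝ := fun n => Metric.ball (u (n % M)) ε with hB
  have hBmeas : ∀ n, MeasurableSet (B n) := fun n => measurableSet_ball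
  set W : ℕ → Finset ℕ := fun j => (Finset.range M).image (fun i => j * M + i) with hW
  set A : ℕ → Set Ω := fun j => ⋂ n ∈ W j, X n ⁻¹' B n with hA
  have hAmeas : ∀ j, MeasurableSet (A j) := by
    intro j
    exact Finset.measurableSet_biInter _ (fun n _ => (hmeas n) (hBmeas n))
  have key : ∀ K : Finset ℕ, P (⋂ n ∈ K, X n ⁻¹' B n) = ∏ n ∈ K, P (X n ⁻¹' B n) := by
    intro K
    exact (iIndepFun_iff_measure_inter_preimage_eq_mul.1 hindep) K (fun n _ => hBmeas n)
  have hWdisj : ∀ j j', j ≠ j' → Disjoint (W j) (W j') := by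
    intro j j' hne
    rw [Finset.disjoint_left]
    intro n hn hn'
    simp only [hW, Finset.mem_image, Finset.mem_range] at hn hn'
    obtain ⟨i, hi, rfl⟩ := hn
    obtain ⟨i', hi', he⟩ := hn'
    apply hne
    have h1 : (j * M + i) / M = j := by
      rw [mul_comm, Nat.mul_add_div hM, Nat.div_eq_of_lt hi, add_zero]
    have h2 : (j' * M + i') / M = j' := by
      rw [mul_comm, Nat.mul_add_div hM, Nat.div_eq_of_lt hi', add_zero]
    rw [← h1, ← he, h2]
  have hAval : ∀ j, P (A j) = ∏ i ∈ Finset.range M, P {ω | |X 0 ω - u i| < ε} := by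
    intro j
    rw [hA]
    simp only
    rw [key (W j), hW, Finset.prod_image (by intro a _ b _ h; have h' : j * M + a = j * M + b := h; omega)]
    apply Finset.prod_congr rfl
    intro i hi
    rw [Finset.mem_range] at hi
    have hmod : (j * M + i) % M = i := by
      rw [mul_comm j M, Nat.mul_add_mod, Nat.mod_eq_of_lt hi]
    have h2 := (hident (j * M + i)).measure_mem_eq (hBmeas (j * M + i))
    rw [h2, hB]
    have h3 : X 0 ⁻¹' Metric.ball (u ((j * M + i) % M)) ε = {ω | |X 0 ω - u i| < ε} := by
      ext ω
      simp [hmod, Metric.mem_ball, Real.dist_eq]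
    rw [h3]
  set c : ℝ≥0∞ := ∏ i ∈ Finset.range M, P {ω | |X 0 ω - u i| < ε} with hc
  have hcpos : c ≠ 0 := by
    rw [hc, Finset.prod_ne_zero_iff]
    intro i hi
    rw [Finset.mem_range] at hi
    exact (hu i hi).ne'
  have hiIndepA : iIndepSet A P := by
    rw [iIndepSet_iff_meas_biInter hAmeas]
    intro J
    have h1 : (⋂ j ∈ J, A j) = ⋂ n ∈ J.biUnion W, X n ⁻¹' B n := by
      rw [Finset.set_biInter_biUnion]
    rw [h1, key]
    rw [Finset.prod_biUnion]
    · apply Finset.prod_congr rfl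
      intro j _
      exact (key (W j)).symm
    · intro j _ j' _ hne
      exact hWdisj j j' hne
  have htop : (∑' j, P (A j)) = ∞ := by
    have : ∀ j, P (A j) = c := fun j => hAval j
    rw [tsum_congr this]
    exact ENNReal.tsum_const_eq_top_of_ne_zero hcpos
  have hone : P (limsup A atTop) = 1 := measure_limsup_eq_one hAmeas hiIndepA htop
  have hae : ∀ᵐ ω ∂P, ω ∈ limsup A atTop := by
    rw [ae_iff]
    have hmls : MeasurableSet (limsup A atTop) := MeasurableSet.measurableSet_limsup hAmeas
    have : {ω | ¬ ω ∈ limsup A atTop} = (limsup A atTop)ᶜ := rfl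
    rw [this, measure_compl hmls (measure_ne_top P _), hone, measure_univ, tsub_self]
  filter_upwards [hae] with ω hω N
  rw [mem_limsup_iff_frequently_mem, Filter.frequently_atTop] at hω
  obtain ⟨j, hjN, hj⟩ := hω N
  refine ⟨j * M, le_trans hjN (Nat.le_mul_of_pos_right j hM), ?_⟩
  intro i hi
  have hmem : ω ∈ X (j * M + i) ⁻¹' B (j * M + i) := by
    rw [hA] at hj
    simp only [Set.mem_iInter] at hj
    exact hj (j * M + i) (by
      simp only [hW, Finset.mem_image, Finset.mem_range]
      exact ⟨i, hi, rfl⟩)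
  have hmod : (j * M + i) % M = i := by
    rw [mul_comm j M, Nat.mul_add_mod, Nat.mod_eq_of_lt hi]
  simpa [hB, Set.preimage, Metric.mem_ball, Real.dist_eq, hmod] using hmem

end Prob


/-- `Occ a L ε k q`: at position `q` the sequence `a` has an `ε`-approximate occurrence of the
word `L k` padded with small entries at `q` and `q + 1 + |L k|`. -/
def Occ (a : ℕ → ℝ) (L : ℕ → List ℝ) (ε : ℝ) (k q : ℕ) : Prop :=
  (∀ i, i < (L k).length → |a (q + 1 + i) - (L k).getD i 0| < ε) ∧
    a q < ε ∧ a (q + 1 + (L k).length) < ε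

/-- Offsets of the blocks of the universal weight sequence. -/
def oW (L : ℕ → List ℝ) : ℕ → ℕ
  | 0 => 0
  | k + 1 => oW L k + (L k).length + 1

/-- Index of the interval of a strictly monotone sequence `u` (with `u 0 = 0`)
containing `n`. -/
def idx (u : ℕ → ℕ) (n : ℕ) : ℕ := Nat.findGreatest (fun s => u s ≤ n) n

/-- The universal weight sequence determined by an enumeration of words. -/
def muW (L : ℕ → List ℝ) (n : ℕ) : ℝ :=
  (L (idx (oW L) n)).getD (n - oW L (idx (oW L) n)) 0

lemma oW_mono (L : ℕ → List ℝ) : StrictMono (oW L) :=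
  strictMono_nat_of_lt_succ (fun k => by simp [oW])

lemma idx_le {u : ℕ → ℕ} (h0 : u 0 = 0) (n : ℕ) : u (idx u n) ≤ n :=
  Nat.findGreatest_spec (P := fun s => u s ≤ n) (Nat.zero_le n) (by simp [h0])

lemma lt_idx_succ {u : ℕ → ℕ} (hu : StrictMono u) (n : ℕ) : n < u (idx u n + 1) := by
  by_contra h
  push_neg at h
  have h2 : idx u n + 1 ≤ n := le_trans hu.le_apply h
  exact Nat.findGreatest_is_greatest (Nat.lt_succ_self _) h2 h

lemma idx_eq {u : ℕ → ℕ} (hu : StrictMono u) (h0 : u 0 = 0) {k n : ℕ}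
    (h1 : u k ≤ n) (h2 : n < u (k + 1)) : idx u n = k := by
  have ha := idx_le h0 n
  have hb := lt_idx_succ hu n
  rcases lt_trichotomy (idx u n) k with h | h | h
  · have hc : u (idx u n + 1) ≤ u k := hu.monotone (by omega)
    omega
  · exact h
  · have hc : u (k + 1) ≤ u (idx u n) := hu.monotone (by omega)
    omega

section Build

variable (a : ℕ → ℝ) (L : ℕ → List ℝ) (ε : ℝ) (dapp : ℝ → ℝ)
  (qc : ℕ → ℕ → ℕ) (kf : ℕ → ℕ → ℕ → ℕ)

/-- One step of the back-and-forth construction.  The state is the current frontier together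
with the finset of already matched block indices. -/
def bstep (st : ℕ × Finset ℕ) : ℕ × Finset ℕ :=
  let k := sInf {m | m ∉ st.2}
  let Q := qc k st.1
  let k' := kf ((insert k st.2).sup id + 1) (Q - st.1) st.1
  (Q + (L k).length + 2, insert k (insert k' st.2))

def bst (s : ℕ) : ℕ × Finset ℕ := (bstep L qc kf)^[s] (0, ∅)

def bT (s : ℕ) : ℕ := (bst L qc kf s).1
def bU (s : ℕ) : Finset ℕ := (bst L qc kf s).2
def bK (s : ℕ) : ℕ := sInf {m | m ∉ bU L qc kf s}
def bQ (s : ℕ) : ℕ := qc (bK L qc kf s) (bT L qc kf s)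
def bK' (s : ℕ) : ℕ :=
  kf ((insert (bK L qc kf s) (bU L qc kf s)).sup id + 1)
    (bQ L qc kf s - bT L qc kf s) (bT L qc kf s)

local notation "T" => bT L qc kf
local notation "U" => bU L qc kf
local notation "K" => bK L qc kf
local notation "Q" => bQ L qc kf
local notation "K'" => bK' L qc kf

lemma bst_succ (s : ℕ) : bst L qc kf (s + 1) = bstep L qc kf (bst L qc kf s) := by
  rw [bst, bst, Function.iterate_succ_apply']

lemma bT_succ (s : ℕ) : T (s + 1) = Q s + (L (K s)).length + 2 := by
  show (bst L qc kf (s+1)).1 = _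
  rw [bst_succ]; rfl

lemma bU_succ (s : ℕ) : U (s + 1) = insert (K s) (insert (K' s) (U s)) := by
  show (bst L qc kf (s+1)).2 = _
  rw [bst_succ]; rfl

lemma bT_zero : T 0 = 0 := rfl
lemma bU_zero : U 0 = ∅ := rfl

lemma bK_not_mem (s : ℕ) : K s ∉ U s := by
  have hne : {m | m ∉ U s}.Nonempty := by
    obtain ⟨m, hm⟩ := (U s).exists_notMem
    exact ⟨m, hm⟩
  exact Nat.sInf_mem hne

lemma bK_le {s k : ℕ} (h : k ∉ U s) : K s ≤ k := Nat.sInf_le h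

variable (hkf1 : ∀ N m t, N ≤ kf N m t)

include hkf1 in
lemma bK'_spec (s : ℕ) : K' s ∉ U s ∧ K' s ≠ K s := by
  have h1 : (insert (K s) (U s)).sup id + 1 ≤ K' s := hkf1 _ _ _
  constructor
  · intro hmem
    have : K' s ≤ (insert (K s) (U s)).sup id :=
      Finset.le_sup (f := id) (Finset.mem_insert_of_mem hmem)
    omega
  · intro hK
    have : K' s ≤ (insert (K s) (U s)).sup id := by
      rw [hK]
      exact Finset.le_sup (f := id) (Finset.mem_insert_self _ _)
    omega

lemma bU_mono : Monotone U := by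
  apply monotone_nat_of_le_succ
  intro s
  rw [bU_succ]
  intro x hx
  exact Finset.mem_insert_of_mem (Finset.mem_insert_of_mem hx)

lemma mem_bU_succ_iff (s k : ℕ) : k ∈ U (s + 1) ↔ k = K s ∨ k = K' s ∨ k ∈ U s := by
  rw [bU_succ]; simp [Finset.mem_insert]

include hkf1 in
lemma bK_inj {s s' : ℕ} (h : s < s') : K s ≠ K s' := by
  intro he
  have h1 : K s ∈ U (s + 1) := (mem_bU_succ_iff L qc kf s _).2 (Or.inl rfl)
  have h2 : K s ∈ U s' := bU_mono L qc kf (by omega : s + 1 ≤ s') h1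
  rw [he] at h2
  exact bK_not_mem L qc kf s' h2

include hkf1 in
lemma bU_total (k : ℕ) : ∃ s, k ∈ U (s + 1) := by
  by_contra hc
  push_neg at hc
  have hall : ∀ s, k ∉ U s := by
    intro s
    match s with
    | 0 => simp [bU_zero]
    | s + 1 => exact hc s
  have hle : ∀ s, K s ≤ k := fun s => bK_le L qc kf (hall s)
  obtain ⟨s, s', hne, he⟩ :=
    Finite.exists_ne_map_eq_of_infinite (fun s => (⟨K s, by have := hle s; omega⟩ : Fin (k+1)))
  have : K s = K s' := by simpa using he
  rcases lt_or_gt_of_ne hne with h | h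
  · exact bK_inj L qc kf hkf1 h this
  · exact bK_inj L qc kf hkf1 h this.symm

include hkf1 in
lemma comb (hε : 0 < ε)
    (hdapp : ∀ n, |a n - dapp (a n)| < ε)
    (hq1 : ∀ k N, N ≤ qc k N) (hq2 : ∀ k N, Occ a L ε k (qc k N))
    (hkl : ∀ N m t, (L (kf N m t)).length = m)
    (hkv : ∀ N m t i, i < m → (L (kf N m t)).getD i 0 = dapp (a (t + i))) :
    ∃ (σ : ℕ ≃ ℕ) (a' : ℕ → ℝ),
      (∀ n, a' n = a n ∨ (a' n = 0 ∧ a n < ε)) ∧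
      (∀ n, |a' (σ n) - muW L n| ≤ ε) ∧
      (∀ n, a' (σ n) ≠ 0 → σ (n + 1) = σ n + 1) := by
  classical
  have hTQ : ∀ s, T s ≤ Q s := fun s => hq1 _ _
  have hOcc : ∀ s, Occ a L ε (K s) (Q s) := fun s => hq2 _ _
  have hT1 : ∀ s, T (s+1) = Q s + (L (K s)).length + 2 := bT_succ L qc kf
  have hT0 : T 0 = 0 := bT_zero L qc kf
  have hTmono : StrictMono T :=
    strictMono_nat_of_lt_succ (fun s => by have := hTQ s; have := hT1 s; omega)
  have hlenK' : ∀ s, (L (K' s)).length = Q s - T s := fun s => hkl _ _ _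
  have hvalK' : ∀ s i, i < Q s - T s → (L (K' s)).getD i 0 = dapp (a (T s + i)) :=
    fun s i hi => hkv _ _ _ _ hi
  have total := bU_total L qc kf hkf1
  set sOf : ℕ → ℕ := fun k => Nat.find (total k) with hsOf
  have sOf_mem : ∀ k, k ∈ U (sOf k + 1) := fun k => Nat.find_spec (total k)
  have sOf_min : ∀ k s, s < sOf k → k ∉ U (s + 1) := fun k s hs => Nat.find_min (total k) hs
  have sOf_notmem : ∀ k, k ∉ U (sOf k) := by
    intro k
    cases hsk : sOf k with
    | zero => rw [bU_zero]; simp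
    | succ s =>
      have := sOf_min k s (by omega)
      exact this
  have sOf_role : ∀ k, k = K (sOf k) ∨ k = K' (sOf k) := by
    intro k
    have h1 := sOf_mem k
    rw [mem_bU_succ_iff] at h1
    rcases h1 with h | h | h
    · exact Or.inl h
    · exact Or.inr h
    · exact absurd h (sOf_notmem k)
  have sOf_eqK : ∀ s, sOf (K s) = s := by
    intro s
    have h1 : sOf (K s) ≤ s :=
      Nat.find_min' (total (K s)) ((mem_bU_succ_iff L qc kf s _).2 (Or.inl rfl))
    rcases lt_or_eq_of_le h1 with h | h
    · exfalso
      have h2 : K s ∈ U (sOf (K s) + 1) := sOf_mem _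
      have h3 : K s ∈ U s := bU_mono L qc kf (by omega) h2
      exact bK_not_mem L qc kf s h3
    · exact h
  have sOf_eqK' : ∀ s, sOf (K' s) = s := by
    intro s
    have h1 : sOf (K' s) ≤ s :=
      Nat.find_min' (total (K' s)) ((mem_bU_succ_iff L qc kf s _).2 (Or.inr (Or.inl rfl)))
    rcases lt_or_eq_of_le h1 with h | h
    · exfalso
      have h2 : K' s ∈ U (sOf (K' s) + 1) := sOf_mem _
      have h3 : K' s ∈ U s := bU_mono L qc kf (by omega) h2
      exact (bK'_spec L qc kf hkf1 s).1 h3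
    · exact h
  have hoL0 : oW L 0 = 0 := rfl
  have hoLmono : StrictMono (oW L) := oW_mono L
  have hoLs : ∀ k, oW L (k+1) = oW L k + (L k).length + 1 := fun k => rfl
  set start : ℕ → ℕ := fun k => if k = K (sOf k) then Q (sOf k) + 1 else T (sOf k) with hstart
  have startK : ∀ s, start (K s) = Q s + 1 := by
    intro s
    simp [hstart, sOf_eqK s]
  have startK' : ∀ s, start (K' s) = T s := by
    intro s
    simp only [hstart, sOf_eqK' s]
    rw [if_neg (bK'_spec L qc kf hkf1 s).2]
  set g : ℕ → ℕ := fun m => start (idx (oW L) m) + (m - oW L (idx (oW L) m)) with hg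
  have gK : ∀ s k, k = K s → ∀ m, oW L k ≤ m → m < oW L (k+1) →
      g m = Q s + 1 + (m - oW L k) := by
    intro s k hk m h1 h2
    have hi : idx (oW L) m = k := idx_eq hoLmono hoL0 h1 h2
    simp only [hg, hi, hk, startK s]
  have gK' : ∀ s k, k = K' s → ∀ m, oW L k ≤ m → m < oW L (k+1) →
      g m = T s + (m - oW L k) := by
    intro s k hk m h1 h2
    have hi : idx (oW L) m = k := idx_eq hoLmono hoL0 h1 h2
    simp only [hg, hi, hk, startK' s]
  set hI : ℕ → ℕ := fun n => if n ≤ Q (idx T n) then oW L (K' (idx T n)) + (n - T (idx T n))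
    else oW L (K (idx T n)) + (n - (Q (idx T n) + 1)) with hhI
  have hIg : ∀ m, hI (g m) = m := by
    intro m
    have h1 : oW L (idx (oW L) m) ≤ m := idx_le hoL0 m
    have h2 : m < oW L (idx (oW L) m + 1) := lt_idx_succ hoLmono m
    set k := idx (oW L) m with hk
    have hlen : m - oW L k ≤ (L k).length := by have := hoLs k; omega
    rcases sOf_role k with hrole | hrole
    · have hgm := gK (sOf k) k hrole m h1 h2
      have hT1' := hT1 (sOf k)
      rw [← hrole] at hT1'
      have hidx : idx T (g m) = sOf k := by
        apply idx_eq hTmono hT0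
        · have := hTQ (sOf k); omega
        · omega
      simp only [hhI, hidx]
      rw [if_neg (by omega), ← hrole]
      omega
    · have hgm := gK' (sOf k) k hrole m h1 h2
      have hlen2 := hlenK' (sOf k)
      rw [← hrole] at hlen2
      have hidx : idx T (g m) = sOf k := by
        apply idx_eq hTmono hT0
        · omega
        · have := hT1 (sOf k); have := hTQ (sOf k); omega
      have hTQ' := hTQ (sOf k)
      simp only [hhI, hidx]
      rw [if_pos (by omega), ← hrole]
      omega
  have ghI : ∀ n, g (hI n) = n := by
    intro n
    have h1 : T (idx T n) ≤ n := idx_le hT0 n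
    have h2 : n < T (idx T n + 1) := lt_idx_succ hTmono n
    set s := idx T n with hs
    by_cases hcase : n ≤ Q s
    · have hIn : hI n = oW L (K' s) + (n - T s) := by
        simp only [hhI, ← hs]
        rw [if_pos hcase]
      have hb1 : oW L (K' s) ≤ hI n := by omega
      have hb2 : hI n < oW L (K' s + 1) := by
        have := hoLs (K' s); have := hlenK' s; have := hTQ s; omega
      have hgg := gK' s (K' s) rfl (hI n) hb1 hb2
      rw [hgg, hIn]
      omega
    · have hIn : hI n = oW L (K s) + (n - (Q s + 1)) := by
        simp only [hhI, ← hs]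
        rw [if_neg hcase]
      have hb1 : oW L (K s) ≤ hI n := by omega
      have hb2 : hI n < oW L (K s + 1) := by
        have := hoLs (K s); have := hT1 s; omega
      have hgg := gK s (K s) rfl (hI n) hb1 hb2
      rw [hgg, hIn]
      omega
  set Zp : ℕ → Prop := fun n => ∃ s, n = Q s ∨ n = Q s + 1 + (L (K s)).length with hZp
  set a' : ℕ → ℝ := fun n => if Zp n then 0 else a n with ha'
  have ha'Z : ∀ n, Zp n → a' n = 0 := by
    intro n h; simp only [ha', if_pos h]
  have ha'nZ : ∀ n, ¬ Zp n → a' n = a n := by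
    intro n h; simp only [ha', if_neg h]
  have ha'1 : ∀ n, a' n = a n ∨ (a' n = 0 ∧ a n < ε) := by
    intro n
    by_cases h : Zp n
    · refine Or.inr ⟨ha'Z n h, ?_⟩
      obtain ⟨s, hs | hs⟩ := h
      · rw [hs]; exact (hOcc s).2.1
      · rw [hs]; exact (hOcc s).2.2
    · exact Or.inl (ha'nZ n h)
  have hZloc : ∀ s x, T s ≤ x → x < T (s+1) →
      (Zp x ↔ (x = Q s ∨ x = Q s + 1 + (L (K s)).length)) := by
    intro s x hx1 hx2
    constructor
    · rintro ⟨r, hr⟩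
      have hrb1 : T r ≤ x := by
        have l1 := hTQ r
        rcases hr with h | h <;> omega
      have hrb2 : x < T (r+1) := by
        have l2 := hT1 r
        rcases hr with h | h <;> omega
      have e1 : idx T x = r := idx_eq hTmono hT0 hrb1 hrb2
      have e2 : idx T x = s := idx_eq hTmono hT0 hx1 hx2
      rw [e1.symm.trans e2] at hr
      exact hr
    · intro h; exact ⟨s, h⟩
  have hcutEnd : ∀ n, oW L (idx (oW L) n) ≤ n →
      n - oW L (idx (oW L) n) = (L (idx (oW L) n)).length → Zp (g n) := by
    intro n h1 hEnd
    have h2 : n < oW L (idx (oW L) n + 1) := lt_idx_succ hoLmono n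
    set k := idx (oW L) n with hk
    rcases sOf_role k with hrole | hrole
    · have hgm := gK (sOf k) k hrole n h1 h2
      refine ⟨sOf k, Or.inr ?_⟩
      rw [← hrole, hgm]
      omega
    · have hgm := gK' (sOf k) k hrole n h1 h2
      have hlen2 := hlenK' (sOf k)
      rw [← hrole] at hlen2
      refine ⟨sOf k, Or.inl ?_⟩
      have := hTQ (sOf k)
      omega
  have ha'2 : ∀ n, |a' (g n) - muW L n| ≤ ε := by
    intro n
    have h1 : oW L (idx (oW L) n) ≤ n := idx_le hoL0 n
    have h2 : n < oW L (idx (oW L) n + 1) := lt_idx_succ hoLmono n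
    set k := idx (oW L) n with hk
    have hlen : n - oW L k ≤ (L k).length := by have := hoLs k; omega
    have hmu : muW L n = (L k).getD (n - oW L k) 0 := rfl
    rcases eq_or_lt_of_le hlen with hEnd | hIn
    · have hmu0 : muW L n = 0 := by
        rw [hmu, List.getD_eq_default]
        omega
      have hcut : Zp (g n) := hcutEnd n h1 (by rw [← hk]; omega)
      rw [ha'Z _ hcut, hmu0]
      simp [le_of_lt hε]
    · rcases sOf_role k with hrole | hrole
      · have hgm := gK (sOf k) k hrole n h1 h2
        have hT1' := hT1 (sOf k)
        rw [← hrole] at hT1'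
        have hnZ : ¬ Zp (g n) := by
          rw [hZloc (sOf k) (g n) (by have := hTQ (sOf k); omega) (by omega), ← hrole]
          push_neg
          constructor <;> omega
        have hOc := (hOcc (sOf k)).1
        rw [← hrole] at hOc
        rw [ha'nZ _ hnZ, hgm, hmu]
        exact le_of_lt (hOc (n - oW L k) hIn)
      · have hgm := gK' (sOf k) k hrole n h1 h2
        have hlen2 := hlenK' (sOf k)
        rw [← hrole] at hlen2
        have hnZ : ¬ Zp (g n) := by
          rw [hZloc (sOf k) (g n) (by omega)
            (by have := hT1 (sOf k); have := hTQ (sOf k); omega)]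
          push_neg
          constructor <;> omega
        have hval := hvalK' (sOf k) (n - oW L k) (by omega)
        rw [← hrole] at hval
        rw [ha'nZ _ hnZ, hgm, hmu, hval]
        exact le_of_lt (hdapp _)
  have ha'3 : ∀ n, a' (g n) ≠ 0 → g (n + 1) = g n + 1 := by
    intro n hne
    have h1 : oW L (idx (oW L) n) ≤ n := idx_le hoL0 n
    have h2 : n < oW L (idx (oW L) n + 1) := lt_idx_succ hoLmono n
    set k := idx (oW L) n with hk
    have hlen : n - oW L k ≤ (L k).length := by have := hoLs k; omega
    rcases eq_or_lt_of_le hlen with hEnd | hIn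
    · exact absurd (ha'Z _ (hcutEnd n h1 (by rw [← hk]; omega))) hne
    · have hidx2 : idx (oW L) (n+1) = k := by
        apply idx_eq hoLmono hoL0 (by omega)
        have := hoLs k
        omega
      simp only [hg, hidx2, ← hk]
      omega
  exact ⟨⟨g, hI, hIg, ghI⟩, a', ha'1, ha'2, ha'3⟩

end Build


section Assemble

lemma one_div_succ_pos (j : ℕ) : (0:ℝ) < 1 / (j + 1) := by positivity

/-- if `0` belongs to the essential range of `X_1`, then there is a deterministic
unilateral weighted shift `W` (with bounded nonnegative weights) such that almost surely
`T(ω)` is approximately unitarily equivalent to `W`. -/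
theorem stmt_7
    {Ω : Type*} [MeasurableSpace Ω] (P : Measure Ω) [IsProbabilityMeasure P]
    (X : ℕ → Ω → ℝ) (C : ℝ)
    (hmeas : ∀ n, Measurable (X n))
    (hbdd : ∀ n ω, 0 ≤ X n ω ∧ X n ω ≤ C)
    (hindep : iIndepFun X P)
    (hident : ∀ n, IdentDistrib (X n) (X 0) P P)
    (T : Ω → Hil →L[ℂ] Hil)
    (hT : ∀ ω n, T ω (el n) = (X n ω : ℂ) • el (n + 1))
    (h0 : (0:ℝ) ∈ essRange P (X 0)) :
    ∃ (μ : ℕ → ℝ) (W : Hil →L[ℂ] Hil),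
      (∀ n, 0 ≤ μ n) ∧ (∃ M : ℝ, ∀ n, μ n ≤ M) ∧
      (∀ n, W (el n) = (μ n : ℂ) • el (n + 1)) ∧
      ∀ᵐ ω ∂P, ApproxUnitEquiv (T ω) W := by
  classical
  set S : Set ℝ := essRange P (X 0) with hS
  -- S is contained in [0, C]
  have hSsub : S ⊆ Set.Icc 0 C := by
    intro y hy
    by_contra hyc
    simp only [Set.mem_Icc, not_and_or, not_le] at hyc
    have hnull : ∃ ε > (0:ℝ), {ω | |X 0 ω - y| < ε} = ∅ := by
      rcases hyc with hy0 | hyC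
      · refine ⟨-y, by linarith, ?_⟩
        ext ω
        simp only [Set.mem_setOf_eq, Set.mem_empty_iff_false, iff_false, not_lt]
        have h1 := (hbdd 0 ω).1
        rw [abs_sub_comm, abs_of_nonpos (by linarith)]
        linarith
      · refine ⟨y - C, by linarith, ?_⟩
        ext ω
        simp only [Set.mem_setOf_eq, Set.mem_empty_iff_false, iff_false, not_lt]
        have h2 := (hbdd 0 ω).2
        rw [abs_sub_comm, abs_of_nonneg (by linarith)]
        linarith
    obtain ⟨ε, hε, hempty⟩ := hnull
    have := hy ε hε
    rw [hempty] at this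
    simp at this
  have hC0 : (0:ℝ) ≤ C := (hSsub h0).2
  -- countable dense subset of S
  obtain ⟨D, hDsub, hDcount, hDdense⟩ :=
    (TopologicalSpace.IsSeparable.of_separableSpace S).exists_countable_dense_subset
  -- the set of finite words over D
  set 𝔏 : Set (List ℝ) := {l | ∀ x ∈ l, x ∈ D} with h𝔏
  have h𝔏count : 𝔏.Countable := by
    have : Countable ↥D := hDcount.to_subtype
    have h1 : 𝔏 ⊆ Set.range (fun l : List ↥D => l.map Subtype.val) := by
      intro l hl
      refine ⟨l.attach.map (fun x => (⟨x.1, hl x.1 x.2⟩ : ↥D)), ?_⟩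
      simp [List.map_map]
    exact (Set.countable_range _).mono h1
  obtain ⟨F, hF⟩ := h𝔏count.exists_eq_range ⟨[], by simp [h𝔏]⟩
  set L : ℕ → List ℝ := fun k => F (Nat.unpair k).1 with hL
  have hLD : ∀ k, ∀ x ∈ L k, x ∈ D := by
    intro k
    have : F (Nat.unpair k).1 ∈ 𝔏 := by rw [hF]; exact ⟨_, rfl⟩
    exact this
  have hLocc : ∀ l ∈ 𝔏, ∀ N, ∃ k, N ≤ k ∧ L k = l := by
    intro l hl N
    rw [hF] at hl
    obtain ⟨n, hn⟩ := hl
    refine ⟨Nat.pair n N, Nat.right_le_pair n N, ?_⟩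
    simp only [hL, Nat.unpair_pair]
    exact hn
  -- range of the universal weights
  have hmuWmem : ∀ n, muW L n = 0 ∨ muW L n ∈ S := by
    intro n
    rw [muW]
    rcases lt_or_ge (n - oW L (idx (oW L) n)) (L (idx (oW L) n)).length with h | h
    · rw [List.getD_eq_getElem _ _ h]
      exact Or.inr (hDsub (hLD _ _ (List.getElem_mem h)))
    · rw [List.getD_eq_default _ _ h]
      exact Or.inl rfl
  have hmuW0 : ∀ n, 0 ≤ muW L n := by
    intro n
    rcases hmuWmem n with h | h
    · rw [h]
    · exact (hSsub h).1
  have hmuWC : ∀ n, muW L n ≤ C := by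
    intro n
    rcases hmuWmem n with h | h
    · rw [h]; exact hC0
    · exact (hSsub h).2
  have hmuWnorm : ∀ n, ‖((muW L n : ℝ) : ℂ)‖ ≤ C := by
    intro n
    rw [Complex.norm_real, Real.norm_eq_abs, abs_of_nonneg (hmuW0 n)]
    exact hmuWC n
  set W : Hil →L[ℂ] Hil := shiftCLM (fun n => ((muW L n : ℝ) : ℂ)) C hC0 hmuWnorm with hW
  refine ⟨muW L, W, hmuW0, ⟨C, hmuWC⟩, fun n => shiftCLM_el _ _ _ _ n, ?_⟩
  -- the almost sure event
  have hSmem : ∀ y ∈ S, ∀ ε : ℝ, 0 < ε → 0 < P {ω | |X 0 ω - y| < ε} := by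
    intro y hy ε hε
    exact hy ε hε
  -- patterns
  set pat : ℕ → ℕ → ℝ := fun k i => ((0 : ℝ) :: (L k ++ [(0:ℝ)])).getD i 0 with hpat
  have hpatS : ∀ k i, pat k i ∈ S := by
    intro k i
    rw [hpat]
    match i with
    | 0 => exact h0
    | i + 1 =>
      show ((L k ++ [(0:ℝ)]).getD i 0) ∈ S
      rcases lt_or_ge i (L k).length with h | h
      · rw [List.getD_append _ _ _ _ h]
        rcases lt_or_ge i (L k).length with h' | h'
        · rw [List.getD_eq_getElem _ _ h']
          exact hDsub (hLD _ _ (List.getElem_mem h'))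
        · omega
      · rw [List.getD_append_right _ _ _ _ h]
        rcases Nat.lt_or_ge (i - (L k).length) 1 with h' | h'
        · interval_cases h'' : (i - (L k).length)
          · exact h0
        · rw [List.getD_eq_default]
          · exact h0
          · simpa using h'
  have haeP : ∀ᵐ ω ∂P, ∀ km : ℕ × ℕ, ∀ N, ∃ q, N ≤ q ∧
      ∀ i, i < (L km.1).length + 2 → |X (q + i) ω - pat km.1 i| < 1 / (km.2 + 1) := by
    rw [ae_all_iff]
    intro km
    exact ae_pattern P X hmeas hindep hident (pat km.1) ((L km.1).length + 2) (1 / (km.2 + 1))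
      (fun i _ => hSmem _ (hpatS km.1 i) _ (one_div_succ_pos km.2))
  filter_upwards [ae_mem_essRange P X hident, haeP] with ω hmemS hpatω
  -- now the deterministic part
  set a : ℕ → ℝ := fun n => X n ω with ha
  have haS : ∀ n, a n ∈ S := hmemS
  have haBdd : ∀ n, 0 ≤ a n ∧ a n ≤ C := fun n => hbdd n ω
  have hTa : ∀ n, T ω (el n) = ((a n : ℝ) : ℂ) • el (n + 1) := fun n => hT ω n
  -- for each j, find a unitary
  have key : ∀ j : ℕ, ∃ Uop : Hil →L[ℂ] Hil, Uop ∈ unitary (Hil →L[ℂ] Hil) ∧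
      ‖star Uop * T ω * Uop - W‖ ≤ 2 * (1 / (j + 1)) := by
    intro j
    set ε : ℝ := 1 / (j + 1) with hε'
    have hε : 0 < ε := one_div_succ_pos j
    -- approximation into D
    have hex : ∀ n, ∃ d, d ∈ D ∧ |a n - d| < ε := by
      intro n
      have h1 : a n ∈ closure D := hDdense (haS n)
      rw [Metric.mem_closure_iff] at h1
      obtain ⟨d, hd1, hd2⟩ := h1 ε hε
      exact ⟨d, hd1, by rwa [Real.dist_eq] at hd2⟩
    set dapp : ℝ → ℝ := fun x =>
      if h : ∃ d, d ∈ D ∧ |x - d| < ε then Classical.choose h else 0 with hdapp'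
    have hdapp : ∀ n, |a n - dapp (a n)| < ε := by
      intro n
      simp only [hdapp']
      rw [dif_pos (hex n)]
      exact (Classical.choose_spec (hex n)).2
    have hdD : ∀ n, dapp (a n) ∈ D := by
      intro n
      simp only [hdapp']
      rw [dif_pos (hex n)]
      exact (Classical.choose_spec (hex n)).1
    -- occurrences
    have hqc : ∀ k N, ∃ q, N ≤ q ∧ Occ a L ε k q := by
      intro k N
      obtain ⟨q, hq1, hq2⟩ := hpatω (k, j) N
      replace hq2 : ∀ i, i < (L k).length + 2 → |a (q + i) - pat k i| < ε := hq2
      refine ⟨q, hq1, ?_, ?_, ?_⟩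
      · intro i hi
        have := hq2 (i + 1) (by omega)
        have hgd : pat k (i + 1) = (L k).getD i 0 := by
          rw [hpat]
          show ((L k ++ [(0:ℝ)]).getD i 0) = _
          rw [List.getD_append _ _ _ _ hi]
        rw [hgd] at this
        rw [show q + 1 + i = q + (i + 1) by omega]
        exact this
      · have := hq2 0 (by omega)
        have hgd : pat k 0 = 0 := by rw [hpat]; rfl
        rw [hgd, sub_zero] at this
        exact (abs_lt.1 this).2
      · have := hq2 ((L k).length + 1) (by omega)
        have hgd : pat k ((L k).length + 1) = 0 := by
          rw [hpat]
          show ((L k ++ [(0:ℝ)]).getD (L k).length 0) = _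
          rw [List.getD_append_right _ _ _ _ (le_refl _)]
          simp
        rw [hgd, sub_zero] at this
        have h2 := (abs_lt.1 this).2
        rw [show q + 1 + (L k).length = q + ((L k).length + 1) by omega]
        exact h2
    have hkfex : ∀ N m t, ∃ k', N ≤ k' ∧
        L k' = (List.range m).map (fun i => dapp (a (t + i))) := by
      intro N m t
      apply hLocc
      intro x hx
      rw [List.mem_map] at hx
      obtain ⟨i, _, rfl⟩ := hx
      exact hdD _
    choose qc hqc1 hqc2 using hqc
    choose kf hkf1 hkfL using hkfex
    have hkl : ∀ N m t, (L (kf N m t)).length = m := by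
      intro N m t
      rw [hkfL]
      simp
    have hkv : ∀ N m t i, i < m → (L (kf N m t)).getD i 0 = dapp (a (t + i)) := by
      intro N m t i hi
      rw [hkfL, List.getD_eq_getElem _ _ (by simpa using hi)]
      simp
    obtain ⟨σ, a', ha'1, ha'2, ha'3⟩ :=
      comb a L ε dapp qc kf hkf1 hε hdapp hqc1 hqc2 hkl hkv
    -- operator part
    have ha'bdd : ∀ n, ‖((a' n : ℝ) : ℂ)‖ ≤ C := by
      intro n
      rw [Complex.norm_real, Real.norm_eq_abs]
      rcases ha'1 n with h | h
      · rw [h, abs_of_nonneg (haBdd n).1]; exact (haBdd n).2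
      · rw [h.1]; simpa using hC0
    set T' : Hil →L[ℂ] Hil := shiftCLM (fun n => ((a' n : ℝ) : ℂ)) C hC0 ha'bdd with hT'
    set Uop : Hil →L[ℂ] Hil := permU σ with hUop
    have hUmem : Uop ∈ unitary (Hil →L[ℂ] Hil) := permU_mem σ
    refine ⟨Uop, hUmem, ?_⟩
    have hTT' : ‖T ω - T'‖ ≤ ε := by
      apply shiftlike_norm_le (le_of_lt hε)
        (c := fun n => ((a n : ℝ) : ℂ) - ((a' n : ℝ) : ℂ))
      · intro n
        rw [ContinuousLinearMap.sub_apply, hTa n, hT', shiftCLM_el, sub_smul]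
      · intro n
        rw [← Complex.ofReal_sub, Complex.norm_real, Real.norm_eq_abs]
        rcases ha'1 n with h | h
        · rw [h]; simpa using le_of_lt hε
        · rw [h.1, sub_zero, abs_of_nonneg (haBdd n).1]
          exact le_of_lt h.2
    have hconj : ∀ n, (star Uop * T' * Uop) (el n) = ((a' (σ n) : ℝ) : ℂ) • el (n + 1) := by
      apply conj_el (fun n => shiftCLM_el _ _ _ _ n) σ
      intro n hne
      apply ha'3 n
      exact fun hc => hne (by rw [hc]; simp)
    have hT'W : ‖star Uop * T' * Uop - W‖ ≤ ε := by
      apply shiftlike_norm_le (le_of_lt hε)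
        (c := fun n => ((a' (σ n) : ℝ) : ℂ) - ((muW L n : ℝ) : ℂ))
      · intro n
        rw [ContinuousLinearMap.sub_apply, hconj n, hW, shiftCLM_el, sub_smul]
      · intro n
        rw [← Complex.ofReal_sub, Complex.norm_real, Real.norm_eq_abs]
        exact ha'2 n
    have hsplit : star Uop * T ω * Uop - W =
        star Uop * (T ω - T') * Uop + (star Uop * T' * Uop - W) := by
      noncomm_ring
    have hnormU : ‖Uop‖ ≤ 1 := norm_permU_le σ
    have hnormUs : ‖star Uop‖ ≤ 1 := by
      rw [hUop, star_permU]
      exact norm_permU_le σ.symm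
    calc ‖star Uop * T ω * Uop - W‖
        ≤ ‖star Uop * (T ω - T') * Uop‖ + ‖star Uop * T' * Uop - W‖ := by
          rw [hsplit]; exact norm_add_le _ _
      _ ≤ ε + ε := by
          apply add_le_add _ hT'W
          calc ‖star Uop * (T ω - T') * Uop‖ ≤ ‖star Uop * (T ω - T')‖ * ‖Uop‖ :=
                norm_mul_le _ _
            _ ≤ ‖star Uop‖ * ‖T ω - T'‖ * ‖Uop‖ := by
                apply mul_le_mul_of_nonneg_right (norm_mul_le _ _) (norm_nonneg _)
            _ ≤ 1 * ε * 1 := by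
                apply mul_le_mul (mul_le_mul hnormUs hTT' (norm_nonneg _) zero_le_one)
                  hnormU (norm_nonneg _) (by positivity)
            _ = ε := by ring
      _ = 2 * (1 / (j + 1)) := by rw [hε']; ring
  choose Useq hU1 hU2 using key
  refine ⟨Useq, hU1, ?_⟩
  have hlim : Tendsto (fun j : ℕ => 2 * (1 / ((j : ℝ) + 1))) atTop (nhds 0) := by
    have := tendsto_one_div_add_atTop_nhds_zero_nat (𝕜 := ℝ)
    simpa using this.const_mul 2
  apply squeeze_zero (fun j => norm_nonneg _) (fun j => hU2 j) hlim

end Assemble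
end
end

section
/- Let (X_n)_{n≥1} be i.i.d. nonnegative bounded random variables and let Γ ⊆ ℝ be the essential range of X_1. Then almost surely, for every n ≥ 1, the closure in ℝⁿ of the set {(X_{k+1}(ω), X_{k+2}(ω), …, X_{k+n}(ω)) : k ≥ 0} equals Γⁿ (the n-fold Cartesian product of Γ). -/
open MeasureTheory ProbabilityTheory Filter

noncomputable section

lemma essRange_isClosed {Ω : Type*} [MeasurableSpace Ω] (P : Measure Ω) (f : Ω → ℝ) :
    IsClosed (essRange P f) := by
  rw [← isOpen_compl_iff, Metric.isOpen_iff]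
  intro y hy
  simp only [Set.mem_compl_iff, essRange, Set.mem_setOf_eq, not_forall, not_lt,
    nonpos_iff_eq_zero] at hy
  obtain ⟨ε, hε, h0⟩ := hy
  refine ⟨ε / 2, by linarith, fun y' hy' => ?_⟩
  simp only [Set.mem_compl_iff, essRange, Set.mem_setOf_eq, not_forall, not_lt,
    nonpos_iff_eq_zero]
  refine ⟨ε / 2, by linarith, le_antisymm (le_trans (measure_mono ?_) h0.le) zero_le⟩
  intro ω hω
  simp only [Set.mem_setOf_eq] at hω ⊢
  have := Real.dist_eq y' y ▸ Metric.mem_ball.mp hy'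
  calc |f ω - y| = |(f ω - y') + (y' - y)| := by ring_nf
    _ ≤ |f ω - y'| + |y' - y| := abs_add_le _ _
    _ < ε := by linarith

/-- The preimage of the complement of the essential range is null. -/
lemma measure_notMem_essRange {Ω : Type*} [MeasurableSpace Ω] (P : Measure Ω)
    (f : Ω → ℝ) (hf : Measurable f) : P {ω | f ω ∉ essRange P f} = 0 := by
  classical
  -- cover the complement by rational balls of measure zero
  set Z : Set (ℚ × ℚ) := {qr | P {ω | |f ω - (qr.1 : ℝ)| < (qr.2 : ℝ)} = 0} with hZ
  have hsub : {ω | f ω ∉ essRange P f} ⊆ ⋃ qr ∈ Z, {ω | |f ω - (qr.1 : ℝ)| < (qr.2 : ℝ)} := by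
    intro ω hω
    simp only [Set.mem_setOf_eq, essRange, not_forall, not_lt, nonpos_iff_eq_zero] at hω
    obtain ⟨ε, hε, h0⟩ := hω
    obtain ⟨q, hq⟩ := exists_rat_near (f ω) (show (0:ℝ) < ε / 4 by linarith)
    obtain ⟨r, hr1, hr2⟩ := exists_rat_btwn (show (ε:ℝ) / 4 < ε / 2 by linarith)
    refine Set.mem_biUnion (show (q, r) ∈ Z from ?_) ?_
    · refine le_antisymm (le_trans (measure_mono ?_) h0.le) zero_le
      intro x hx
      simp only [Set.mem_setOf_eq] at hx ⊢
      calc |f x - f ω| = |(f x - (q:ℝ)) + ((q:ℝ) - f ω)| := by ring_nf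
        _ ≤ |f x - (q:ℝ)| + |(q:ℝ) - f ω| := abs_add_le _ _
        _ < ε := by rw [abs_sub_comm (q:ℝ)]; linarith
    · simpa using lt_trans hq hr1
  refine le_antisymm (le_trans (measure_mono hsub) ?_) zero_le
  refine le_trans (measure_biUnion_le _ (Set.to_countable Z) _) ?_
  refine le_of_eq (ENNReal.tsum_eq_zero.mpr fun qr => qr.2)


lemma exists_block_hit {Ω : Type*} [MeasurableSpace Ω] (P : Measure Ω) [IsProbabilityMeasure P]
    (X : ℕ → Ω → ℝ)
    (hmeas : ∀ n, Measurable (X n))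
    (hindep : iIndepFun X P)
    (hident : ∀ n, IdentDistrib (X n) (X 0) P P)
    {n : ℕ} (hn : 0 < n) (y : Fin n → ℝ) {ε : ℝ} (hε : 0 < ε)
    (hpos : ∀ i : Fin n, 0 < P {ω | |X 0 ω - y i| < ε}) :
    ∀ᵐ ω ∂P, ∃ k : ℕ, ∀ i : Fin n, |X (k + (i : ℕ)) ω - y i| < ε := by
  classical
  set sets : ℕ → Set ℝ := fun j => Metric.ball (y ⟨j % n, Nat.mod_lt j hn⟩) ε with hsets
  set s : ℕ → Set Ω := fun m => ⋂ i : Fin n, X (m * n + i) ⁻¹' Metric.ball (y i) ε with hsdef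
  set g : ℕ → Finset ℕ := fun m => Finset.image (fun i : Fin n => m * n + i) Finset.univ with hg
  have hfin : ∀ m (i : Fin n), (⟨(m * n + (i : ℕ)) % n, Nat.mod_lt _ hn⟩ : Fin n) = i := by
    intro m i
    refine Fin.ext ?_
    show (m * n + (i : ℕ)) % n = (i : ℕ)
    rw [mul_comm, Nat.mul_add_mod, Nat.mod_eq_of_lt i.isLt]
  have h1 : ∀ m, (⋂ j ∈ g m, X j ⁻¹' sets j) = s m := by
    intro m
    ext ω
    simp only [hg, Set.mem_iInter, Finset.mem_image, Finset.mem_univ, true_and, hsdef,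
      Set.mem_preimage, forall_exists_index]
    constructor
    · intro h i
      have := h (m * n + i) i rfl
      simp only [hsets] at this
      rwa [hfin] at this
    · rintro h j i rfl
      simp only [hsets]
      rw [hfin]
      exact h i
  have key : ∀ T : Finset ℕ, P (⋂ j ∈ T, X j ⁻¹' sets j) = ∏ j ∈ T, P (X j ⁻¹' sets j) := by
    intro T
    refine hindep.measure_inter_preimage_eq_mul T (fun j _ => measurableSet_ball)
  have hinj : ∀ m, Set.InjOn (fun i : Fin n => m * n + (i : ℕ)) ↑(Finset.univ : Finset (Fin n)) := by
    intro m i _ j _ h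
    exact Fin.ext (Nat.add_left_cancel h)
  have hdiv : ∀ m (i : Fin n), (m * n + (i : ℕ)) / n = m := by
    intro m i
    rw [mul_comm, Nat.mul_add_div hn, Nat.div_eq_of_lt i.isLt, add_zero]
  have hdisj : ∀ m1 ∈ (Set.univ : Set ℕ), ∀ m2 ∈ (Set.univ : Set ℕ), m1 ≠ m2 →
      Disjoint (g m1) (g m2) := by
    intro m1 _ m2 _ hne
    rw [Finset.disjoint_left]
    rintro a ha1 ha2
    simp only [hg, Finset.mem_image, Finset.mem_univ, true_and] at ha1 ha2
    obtain ⟨i1, rfl⟩ := ha1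
    obtain ⟨i2, h2⟩ := ha2
    exact hne (by rw [← hdiv m1 i1, ← h2, hdiv])
  have hPsj : ∀ m, P (s m) = ∏ j ∈ g m, P (X j ⁻¹' sets j) := by
    intro m; rw [← h1, key]
  have hc : ∀ m (i : Fin n), P (X (m * n + (i : ℕ)) ⁻¹' sets (m * n + (i : ℕ))) =
      P {ω | |X 0 ω - y i| < ε} := by
    intro m i
    have hball : X 0 ⁻¹' Metric.ball (y i) ε = {ω | |X 0 ω - y i| < ε} := by
      ext ω; simp [Real.dist_eq]
    have hseq : sets (m * n + (i : ℕ)) = Metric.ball (y i) ε := by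
      simp only [hsets]; rw [hfin]
    rw [hseq, (hident _).measure_mem_eq measurableSet_ball, hball]
  have hPs : ∀ m, P (s m) = ∏ i : Fin n, P {ω | |X 0 ω - y i| < ε} := by
    intro m
    rw [hPsj, hg, Finset.prod_image (hinj m)]
    exact Finset.prod_congr rfl fun i _ => hc m i
  have hms : ∀ m, MeasurableSet (s m) := fun m =>
    MeasurableSet.iInter fun i => (hmeas _) measurableSet_ball
  have hind : iIndepSet s P := by
    rw [iIndepSet_iff_meas_biInter hms]
    intro M
    have e1 : (⋂ m ∈ M, s m) = ⋂ j ∈ M.biUnion g, X j ⁻¹' sets j := by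
      rw [Finset.set_biInter_biUnion]
      exact Set.iInter_congr fun m => Set.iInter_congr fun _ => (h1 m).symm
    rw [e1, key, Finset.prod_biUnion]
    · exact Finset.prod_congr rfl fun m _ => (hPsj m).symm
    · intro m1 h1' m2 h2' hne
      exact hdisj m1 trivial m2 trivial hne
  have hcne : (∏ i : Fin n, P {ω | |X 0 ω - y i| < ε}) ≠ 0 :=
    Finset.prod_ne_zero_iff.mpr fun i _ => (hpos i).ne'
  have htsum : (∑' m, P (s m)) = (⊤ : ENNReal) := by
    rw [tsum_congr hPs]
    exact ENNReal.tsum_const_eq_top_of_ne_zero hcne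
  have hone := measure_limsup_eq_one hms hind htsum
  have hae : ∀ᵐ ω ∂P, ω ∈ limsup s atTop := by
    rw [ae_iff]
    have : {ω | ¬ ω ∈ limsup s atTop} = (limsup s atTop)ᶜ := rfl
    rw [this, prob_compl_eq_zero_iff (MeasurableSet.measurableSet_limsup hms)]
    exact hone
  filter_upwards [hae] with ω hω
  obtain ⟨m, hm⟩ := (Filter.mem_limsup_iff_frequently_mem.mp hω).exists
  refine ⟨m * n, fun i => ?_⟩
  have := Set.mem_iInter.mp hm i
  simpa [Real.dist_eq] using this

/-- almost surely, for every `n ≥ 1`, the closure in `ℝⁿ` of the set of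
consecutive `n`-tuples `(X_{k+1}(ω), …, X_{k+n}(ω))`, `k ≥ 0`, equals the `n`-fold product
of the essential range of `X_1`. -/
theorem stmt_14
    {Ω : Type*} [MeasurableSpace Ω] (P : Measure Ω) [IsProbabilityMeasure P]
    (X : ℕ → Ω → ℝ) (C : ℝ)
    (hmeas : ∀ n, Measurable (X n))
    (hbdd : ∀ n ω, 0 ≤ X n ω ∧ X n ω ≤ C)
    (hindep : iIndepFun X P)
    (hident : ∀ n, IdentDistrib (X n) (X 0) P P) :
    ∀ᵐ ω ∂P, ∀ n : ℕ, 1 ≤ n →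
      closure {v : Fin n → ℝ | ∃ k : ℕ, ∀ i : Fin n, v i = X (k + (i : ℕ)) ω} =
        Set.univ.pi (fun _ : Fin n => essRange P (X 0)) := by
  classical
  set Γ := essRange P (X 0) with hΓ
  have hΓc : IsClosed Γ := essRange_isClosed P (X 0)
  have hUm : MeasurableSet Γᶜ := hΓc.isOpen_compl.measurableSet
  -- a.s. all values lie in Γ
  have hmem : ∀ᵐ ω ∂P, ∀ k, X k ω ∈ Γ := by
    rw [ae_all_iff]
    intro k
    have h0 : P (X 0 ⁻¹' Γᶜ) = 0 := measure_notMem_essRange P (X 0) (hmeas 0)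
    have hk : P (X k ⁻¹' Γᶜ) = 0 := by
      rw [(hident k).measure_mem_eq hUm]; exact h0
    rw [ae_iff]
    exact hk
  -- a.s. density events for all rational targets
  have hdense : ∀ᵐ ω ∂P, ∀ p : Σ n : ℕ, (Fin n → ℚ) × ℚ,
      (0 < p.1 ∧ 0 < ((p.2.2 : ℝ)) ∧
        ∀ i : Fin p.1, 0 < P {ω | |X 0 ω - (p.2.1 i : ℝ)| < (p.2.2 : ℝ)}) →
      ∃ k, ∀ i : Fin p.1, |X (k + (i : ℕ)) ω - (p.2.1 i : ℝ)| < (p.2.2 : ℝ) := by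
    rw [ae_all_iff]
    rintro ⟨n, q, r⟩
    by_cases hgood : 0 < n ∧ 0 < ((r : ℝ)) ∧
        ∀ i : Fin n, 0 < P {ω | |X 0 ω - (q i : ℝ)| < (r : ℝ)}
    · filter_upwards [exists_block_hit P X hmeas hindep hident hgood.1
        (fun i => (q i : ℝ)) hgood.2.1 hgood.2.2] with ω h _
      exact h
    · exact ae_of_all _ fun ω h => absurd h hgood
  filter_upwards [hmem, hdense] with ω h1 h2
  intro n hn
  refine Set.Subset.antisymm ?_ ?_
  · refine closure_minimal ?_ (isClosed_set_pi fun i _ => hΓc)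
    rintro v ⟨k, hk⟩ i _
    rw [hk i]
    exact h1 _
  · intro y hy
    rw [Metric.mem_closure_iff]
    intro ε hε
    choose q hq using fun i : Fin n => exists_rat_near (y i) (show (0:ℝ) < ε / 8 by linarith)
    obtain ⟨r, hr1, hr2⟩ := exists_rat_btwn (show (ε : ℝ) / 8 < ε / 4 by linarith)
    have hrpos : (0:ℝ) < r := lt_trans (by linarith) hr1
    have hgood : (0 < n ∧ 0 < ((r : ℝ)) ∧
        ∀ i : Fin n, 0 < P {ω | |X 0 ω - (q i : ℝ)| < (r : ℝ)}) := by
      refine ⟨hn, hrpos, fun i => ?_⟩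
      have hyi : y i ∈ Γ := hy i (Set.mem_univ i)
      have hpos' := hyi ((r : ℝ) - ε / 8) (by linarith)
      refine lt_of_lt_of_le hpos' (measure_mono ?_)
      intro x hx
      simp only [Set.mem_setOf_eq] at hx ⊢
      calc |X 0 x - (q i : ℝ)| = |(X 0 x - y i) + (y i - (q i : ℝ))| := by ring_nf
        _ ≤ |X 0 x - y i| + |y i - (q i : ℝ)| := abs_add_le _ _
        _ < (r : ℝ) := by have := hq i; linarith [abs_nonneg (y i - (q i : ℝ))]
    obtain ⟨k, hk⟩ := h2 ⟨n, q, r⟩ hgood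
    refine ⟨fun i => X (k + (i : ℕ)) ω, ⟨k, fun i => rfl⟩, ?_⟩
    rw [dist_pi_lt_iff hε]
    intro i
    rw [Real.dist_eq]
    have h3 := hk i
    have h4 := hq i
    calc |y i - X (k + (i : ℕ)) ω|
        = |(y i - (q i : ℝ)) + ((q i : ℝ) - X (k + (i : ℕ)) ω)| := by ring_nf
      _ ≤ |y i - (q i : ℝ)| + |(q i : ℝ) - X (k + (i : ℕ)) ω| := abs_add_le _ _
      _ < ε := by rw [abs_sub_comm ((q i : ℝ))]; linarith

end
end
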